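/- arXiv:2003.08644 — 6 statements merged into one kernel-verified Lean document; each statement's English description precedes it below -/
import Mathlib

section
/- A form η ∈ Λ^{p,p}V* is real if and only if the associated sesquilinear form |η| on Λ^p V_ℂ is Hermitian; and η is a positive form if and only if |η| is a positive semidefinite Hermitian form. -/
/- Setup: `V = ℝⁿ` with its standard basis, `V_ℂ` its complexification,
`V* = Hom_ℝ(V,ℂ)` and `V̄*` the antilinear maps `V_ℂ → ℂ`.  The bigraded exterior algebra
`Λ^{·,·}V* = Λ_ℂ(V* ⊕ V̄*)` is modeled as the exterior algebra over `ℂ` of the free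
complex module on the `2n` generators `du_1,…,du_n` (first summand) and
`dū_1,…,dū_n` (second summand). -/

noncomputable section
open ExteriorAlgebra

/-- The algebra `Λ^{·,·}V* = Λ_ℂ(V* ⊕ V̄*)` for `V = ℝⁿ`. -/
abbrev CForms (n : ℕ) : Type := ExteriorAlgebra ℂ ((Fin n ⊕ Fin n) → ℂ)

/-- The basis element `du_i` of `V*`. -/
def cdu {n : ℕ} (i : Fin n) : CForms n := ExteriorAlgebra.ι ℂ (Pi.single (Sum.inl i) (1 : ℂ))

/-- The basis element `dū_i` of `V̄*`. -/
def cdub {n : ℕ} (i : Fin n) : CForms n := ExteriorAlgebra.ι ℂ (Pi.single (Sum.inr i) (1 : ℂ))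

/-- A general element `Σ cᵢ • du_i` of `V*`. -/
def cOne {n : ℕ} (c : Fin n → ℂ) : CForms n := ∑ i, c i • cdu i

/-- A general element `Σ cᵢ • dū_i` of `V̄*`. -/
def cOneBar {n : ℕ} (c : Fin n → ℂ) : CForms n := ∑ i, c i • cdub i

/-- The conjugate `ᾱ = Σ c̄ᵢ • dū_i ∈ V̄*` of the one-form `α = Σ cᵢ • du_i ∈ V*`. -/
def cConjOne {n : ℕ} (c : Fin n → ℂ) : CForms n := ∑ i, (starRingEnd ℂ) (c i) • cdub i

/-- A decomposable `(p,0)`-form `α₁ ∧ … ∧ α_p` with `α_j ∈ V*`. -/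
def cDecomp {n p : ℕ} (c : Fin p → Fin n → ℂ) : CForms n := (List.ofFn fun j => cOne (c j)).prod

/-- The conjugate `ᾱ₁ ∧ … ∧ ᾱ_p` of the decomposable `(p,0)`-form given by `c`. -/
def cDecompBar {n p : ℕ} (c : Fin p → Fin n → ℂ) : CForms n :=
  (List.ofFn fun j => cConjOne (c j)).prod

/-- `Λ^{p,q}V*`: the span of products of `p` elements of `V*` and `q` elements of `V̄*`. -/
def CFormsPQ (n p q : ℕ) : Submodule ℂ (CForms n) :=
  Submodule.span ℂ { x | ∃ (a : Fin p → Fin n → ℂ) (b : Fin q → Fin n → ℂ),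
    x = cDecomp a * (List.ofFn fun j => cOneBar (b j)).prod }

/-- The convex cone generated by a set `S` (nonnegative real coefficients). -/
def realCone {n : ℕ} (S : Set (CForms n)) : Set (CForms n) :=
  { x | ∃ (m : ℕ) (t : Fin m → ℝ) (y : Fin m → CForms n),
      (∀ k, 0 ≤ t k) ∧ (∀ k, y k ∈ S) ∧ x = ∑ k, (t k : ℂ) • y k }

/-- The generators `α₁ ∧ iᾱ₁ ∧ … ∧ α_p ∧ iᾱ_p` (`α_j ∈ V*`) of the strongly positive cone. -/
def cStrongGen (n p : ℕ) : Set (CForms n) :=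
  { x | ∃ c : Fin p → Fin n → ℂ,
      x = (List.ofFn fun j => cOne (c j) * (Complex.I • cConjOne (c j))).prod }

/-- The cone `Λ^{p,p}_{+,s}V*` of strongly positive `(p,p)`-forms. -/
def cStrongPos (n p : ℕ) : Set (CForms n) := realCone (cStrongGen n p)

/-- The generators `i^{p²} α ∧ ᾱ` (`α ∈ Λ^{p,0}V*`, written as a sum of decomposables)
of the positive cone. -/
def cPosGen (n p : ℕ) : Set (CForms n) :=
  { x | ∃ (m : ℕ) (c : Fin m → Fin p → Fin n → ℂ),
      x = Complex.I ^ (p ^ 2) • ((∑ l, cDecomp (c l)) * (∑ l, cDecompBar (c l))) }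

/-- The cone `Λ^{p,p}_{+}V*` of positive `(p,p)`-forms. -/
def cPos (n p : ℕ) : Set (CForms n) := realCone (cPosGen n p)

/-- The canonical orientation form `ω_n = du_1 ∧ i dū_1 ∧ … ∧ du_n ∧ i dū_n`. -/
def cOmegaTop (n : ℕ) : CForms n := (List.ofFn fun i : Fin n => cdu i * (Complex.I • cdub i)).prod

/-- The set `Λ^{p,p}_{+,w}V*` of weakly positive `(p,p)`-forms: `(p,p)`-forms `ω` such that
for every strongly positive `η` of type `(n-p,n-p)` there is a real `γ ≥ 0` with
`ω ∧ η = γ ω_n`. -/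
def cWeakPos (n p : ℕ) : Set (CForms n) :=
  { x | x ∈ CFormsPQ n p p ∧
      ∀ η ∈ cStrongPos n (n - p), ∃ γ : ℝ, 0 ≤ γ ∧ x * η = (γ : ℂ) • cOmegaTop n }

/-- `σ` is the complex conjugation of `Λ^{·,·}V*`: the (unique) antilinear multiplicative
involution of the ℝ-algebra `Λ^{·,·}V*` with `σ(du_i) = dū_i` and `σ(dū_i) = du_i`. -/
structure IsConjugation (n : ℕ) (σ : CForms n → CForms n) : Prop where
  map_add : ∀ x y, σ (x + y) = σ x + σ y
  map_smul : ∀ (c : ℂ) (x), σ (c • x) = (starRingEnd ℂ) c • σ x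
  map_mul : ∀ x y, σ (x * y) = σ x * σ y
  map_one : σ 1 = 1
  map_du : ∀ i : Fin n, σ (cdu i) = cdub i
  map_dub : ∀ i : Fin n, σ (cdub i) = cdu i

/-- `F` is the antilinear involution of the ℝ-algebra `Λ^{·,·}V*` determined by
`F(λ) = λ̄`, `F(du_i) = du_i` and `F(dū_i) = -dū_i`. -/
structure IsFInvolution (n : ℕ) (F : CForms n → CForms n) : Prop where
  map_add : ∀ x y, F (x + y) = F x + F y
  map_smul : ∀ (c : ℂ) (x), F (c • x) = (starRingEnd ℂ) c • F x
  map_mul : ∀ x y, F (x * y) = F x * F y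
  map_one : F 1 = 1
  map_du : ∀ i : Fin n, F (cdu i) = cdu i
  map_dub : ∀ i : Fin n, F (cdub i) = - cdub i

/-- Index type for the standard basis `e_I` of `Λ^p V_ℂ` (and the monomials `du_I`):
subsets of `{1,…,n}` of cardinality `p`. -/
abbrev IdxC (n p : ℕ) := {s : Finset (Fin n) // s.card = p}

/-- The monomial `du_I = du_{i₁} ∧ … ∧ du_{i_p}` for `I = {i₁ < … < i_p}`. -/
def cMonomial {n : ℕ} (p : ℕ) (I : IdxC n p) : CForms n :=
  (List.ofFn fun j => cdu (I.1.orderEmbOfFin I.2 j)).prod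

/-- The monomial `dū_J = dū_{j₁} ∧ … ∧ dū_{j_p}` for `J = {j₁ < … < j_p}`. -/
def cMonomialBar {n : ℕ} (p : ℕ) (J : IdxC n p) : CForms n :=
  (List.ofFn fun j => cdub (J.1.orderEmbOfFin J.2 j)).prod

/-!
Write `η = Σ c_{IJ} du_I ∧ dū_J` and `s = (-1)^{p(p-1)/2} (-i)^p`, so that `|η|` has matrix
`s c` in the basis `(e_I)` of `Λ^p V_ℂ`. Ordering the generators with every `du` before every `dū`, each `du_I ∧ dū_J` is a
basis vector of the exterior algebra, so `c` is determined by `η`.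

Conjugation sends `du_I ∧ dū_J` to `dū_I ∧ du_J = (-1)^p du_J ∧ dū_I`, hence `η` is real iff
`c = (-1)^p c^*`; since `s̄ = (-1)^p s` this says that `s c` is Hermitian.

A sum `α` of decomposable `(p,0)`-forms is `Σ w_I du_I`, with `w` the sum of their Plücker
coordinates, and then `ᾱ = Σ w̄_I dū_I`, so `i^{p²} α ∧ ᾱ` has coefficient matrix
`i^{p²} w w^*`. As `s i^{p²} = 1`, `η` is positive iff `s c` is a nonnegative combination of
matrices `w w^*`, i.e. positive semidefinite; every `w` occurs (for `p ≥ 1`), since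
`w_I du_I` is decomposable.
-/

open Matrix

section

variable {R M κ : Type*} [CommRing R] [AddCommGroup M] [Module R M]

theorem ExteriorAlgebra.ι_mul_ιMulti_comm (x : M) {k : ℕ} (v : Fin k → M) :
    ι R x * ιMulti R k v = (-1 : R) ^ k • (ιMulti R k v * ι R x) := by
  induction k with
  | zero => simp
  | succ k ih =>
    have hswap : ι R x * ι R (v 0) = -(ι R (v 0) * ι R x) :=
      eq_neg_of_add_eq_zero_left (ι_add_mul_swap x (v 0))
    rw [ιMulti_succ_apply, ← mul_assoc, hswap, neg_mul, mul_assoc, ih, mul_smul_comm, pow_succ,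
      mul_neg_one, neg_smul, ← mul_assoc]

theorem ExteriorAlgebra.ιMulti_mul_ιMulti_comm {k l : ℕ} (u : Fin k → M) (v : Fin l → M) :
    ιMulti R k u * ιMulti R l v = (-1 : R) ^ (k * l) • (ιMulti R l v * ιMulti R k u) := by
  induction k with
  | zero => simp
  | succ k ih =>
    rw [ιMulti_succ_apply, mul_assoc, ih, mul_smul_comm, ← mul_assoc, ι_mul_ιMulti_comm,
      smul_mul_assoc, smul_smul, mul_assoc, ← pow_add, add_mul, one_mul, add_comm]

theorem ExteriorAlgebra.ιMulti_eq_sum_det_smul [LinearOrder κ] [Fintype κ]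
    (b : Module.Basis κ R M) {k : ℕ} (v : Fin k → M) :
    ιMulti R k v = ∑ s : {s : Finset κ // s.card = k},
      (Matrix.of fun i j => b.coord (s.1.orderEmbOfFin s.2 j) (v i)).det •
        ιMulti R k (b ∘ s.1.orderEmbOfFin s.2) := by
  have h := congrArg Subtype.val ((b.exteriorPower k).sum_repr (exteriorPower.ιMulti R k v))
  simp only [exteriorPower.basis_repr_apply, exteriorPower.ιMultiDual_apply_ιMulti,
    Submodule.coe_sum, Submodule.coe_smul, exteriorPower.basis_apply,
    exteriorPower.ιMulti_apply_coe] at h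
  rw [← h]
  exact Fintype.sum_equiv (Equiv.subtypeEquivRight fun _ => Set.powersetCard.mem_iff) _ _
    fun _ => rfl

theorem Module.Basis.exteriorAlgebra_eq_ιMulti [LinearOrder κ] (b : Module.Basis κ R M)
    {s : Finset κ} {k : ℕ} (hs : s.card = k) {f : Fin k → κ} (hf : StrictMono f)
    (hfs : ∀ j, f j ∈ s) : b.ExteriorAlgebra s = ιMulti R k (b ∘ f) := by
  rw [ExteriorAlgebra.basis_apply_ofCard b hs, Finset.orderEmbOfFin_unique hs hfs hf]
  rfl

end

theorem Fin.strictMono_append {α : Type*} [Preorder α] {k l : ℕ} {f : Fin k → α}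
    {g : Fin l → α} (hf : StrictMono f) (hg : StrictMono g) (hfg : ∀ i j, f i < g j) :
    StrictMono (Fin.append f g) := by
  intro r s hrs
  induction r using Fin.addCases with
  | left i =>
    induction s using Fin.addCases with
    | left j => simpa using hf hrs
    | right j => simpa using hfg i j
  | right i =>
    induction s using Fin.addCases with
    | left j => exact absurd hrs (by simp [Fin.lt_def]; omega)
    | right j => simpa using hg ((Fin.natAdd_lt_natAdd_iff k).mp hrs)

variable {n p : ℕ}

lemma cMonomial_eq_ιMulti (I : IdxC n p) :
    cMonomial p I = ιMulti ℂ p fun j => Pi.single (Sum.inl (I.1.orderEmbOfFin I.2 j)) 1 := by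
  rw [ιMulti_apply]; rfl

lemma cMonomialBar_eq_ιMulti (J : IdxC n p) :
    cMonomialBar p J = ιMulti ℂ p fun j => Pi.single (Sum.inr (J.1.orderEmbOfFin J.2 j)) 1 := by
  rw [ιMulti_apply]; rfl

def lexBasis (n : ℕ) : Module.Basis (Fin n ⊕ₗ Fin n) ℂ (Fin n ⊕ Fin n → ℂ) :=
  (Pi.basisFun ℂ (Fin n ⊕ Fin n)).reindex toLex

lemma lexBasis_toLex (x : Fin n ⊕ Fin n) : lexBasis n (toLex x) = Pi.single x 1 := by
  simp [lexBasis]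

def pairSupport (I J : IdxC n p) : Finset (Fin n ⊕ₗ Fin n) :=
  (I.1.disjSum J.1).map toLex.toEmbedding

lemma pairSupport_injective :
    Function.Injective fun IJ : IdxC n p × IdxC n p => pairSupport IJ.1 IJ.2 := by
  rintro ⟨I, J⟩ ⟨I', J'⟩ h
  have hmem : ∀ x, x ∈ I.1.disjSum J.1 ↔ x ∈ I'.1.disjSum J'.1 := fun x => by
    simpa [pairSupport] using congrArg (toLex x ∈ ·) h
  simp only [Prod.mk.injEq]
  exact ⟨Subtype.ext (Finset.ext fun i => by simpa using hmem (Sum.inl i)),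
    Subtype.ext (Finset.ext fun j => by simpa using hmem (Sum.inr j))⟩

lemma cMonomial_mul_cMonomialBar (I J : IdxC n p) :
    cMonomial p I * cMonomialBar p J = (lexBasis n).ExteriorAlgebra (pairSupport I J) := by
  have hcard : (pairSupport I J).card = p + p := by simp [pairSupport, I.2, J.2]
  rw [(lexBasis n).exteriorAlgebra_eq_ιMulti hcard (f := Fin.append
      (toLex ∘ Sum.inl ∘ I.1.orderEmbOfFin I.2) (toLex ∘ Sum.inr ∘ J.1.orderEmbOfFin J.2)),
    cMonomial_eq_ιMulti, cMonomialBar_eq_ιMulti, ιMulti_mul_ιMulti]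
  · congr 1
    ext r : 1
    refine Fin.addCases (fun j => ?_) (fun j => ?_) r
    · simp only [Fin.append_left, Function.comp_apply, lexBasis_toLex]
    · simp only [Fin.append_right, Function.comp_apply, lexBasis_toLex]
  · exact Fin.strictMono_append (Sum.Lex.inl_strictMono.comp (I.1.orderEmbOfFin I.2).strictMono)
      (Sum.Lex.inr_strictMono.comp (J.1.orderEmbOfFin J.2).strictMono)
      fun _ _ => Sum.Lex.inl_lt_inr _ _
  · refine Fin.addCases (fun j => ?_) (fun j => ?_) <;>
      simp [pairSupport, -Fin.natAdd_eq_addNat]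

lemma linearIndependent_cMonomial_mul_cMonomialBar :
    LinearIndependent ℂ fun IJ : IdxC n p × IdxC n p => cMonomial p IJ.1 * cMonomialBar p IJ.2 := by
  simp_rw [cMonomial_mul_cMonomialBar]
  exact (lexBasis n).ExteriorAlgebra.linearIndependent.comp _ pairSupport_injective

def ppForm (n p : ℕ) : Matrix (IdxC n p) (IdxC n p) ℂ →ₗ[ℂ] CForms n where
  toFun c := ∑ I, ∑ J, c I J • (cMonomial p I * cMonomialBar p J)
  map_add' c d := by simp only [Matrix.add_apply, add_smul, Finset.sum_add_distrib]
  map_smul' z c := by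
    simp only [Matrix.smul_apply, smul_eq_mul, mul_smul, Finset.smul_sum, RingHom.id_apply]

lemma ppForm_apply (c : Matrix (IdxC n p) (IdxC n p) ℂ) :
    ppForm n p c = ∑ I, ∑ J, c I J • (cMonomial p I * cMonomialBar p J) := rfl

lemma ppForm_injective : Function.Injective (ppForm n p) := by
  rw [← LinearMap.ker_eq_bot, LinearMap.ker_eq_bot']
  intro c hc
  ext I J
  refine Fintype.linearIndependent_iff.mp linearIndependent_cMonomial_mul_cMonomialBar
    (fun IJ => c IJ.1 IJ.2) ?_ (I, J)
  exact (Fintype.sum_prod_type'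
    (f := fun I J => c I J • (cMonomial p I * cMonomialBar p J))).trans hc

def sesqScalar (p : ℕ) : ℂ := (-1) ^ (p * (p - 1) / 2) * (-Complex.I) ^ p

lemma sesqScalar_mul_I_pow (p : ℕ) : sesqScalar p * Complex.I ^ (p ^ 2) = 1 := by
  have hp : p ^ 2 = 2 * (p * (p - 1) / 2) + p := by
    rw [Nat.mul_div_cancel' (Nat.even_mul_pred_self p).two_dvd]
    cases p <;> simp; ring
  rw [sesqScalar, hp, pow_add, pow_mul, Complex.I_sq]
  calc _ = ((-1 : ℂ) ^ (p * (p - 1) / 2)) ^ 2 * (-Complex.I * Complex.I) ^ p := by ring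
    _ = 1 := by simp [← pow_mul]

lemma sesqScalar_ne_zero (p : ℕ) : sesqScalar p ≠ 0 :=
  left_ne_zero_of_mul_eq_one (sesqScalar_mul_I_pow p)

lemma star_sesqScalar (p : ℕ) : star (sesqScalar p) = (-1) ^ (p * p) * sesqScalar p := by
  have hsign : (-1 : ℂ) ^ (p * p) = (-1) ^ p := by
    rw [pow_mul]; rcases neg_one_pow_eq_or ℂ p with h | h <;> simp [h]
  calc star (sesqScalar p) = (-1) ^ (p * (p - 1) / 2) * Complex.I ^ p := by simp [sesqScalar]
    _ = (-1) ^ (p * (p - 1) / 2) * (-1 * -Complex.I) ^ p := by rw [neg_one_mul, neg_neg]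
    _ = (-1) ^ (p * p) * sesqScalar p := by rw [mul_pow, hsign, sesqScalar]; ring

lemma cMonomialBar_mul_cMonomial (I J : IdxC n p) :
    cMonomialBar p J * cMonomial p I = (-1 : ℂ) ^ (p * p) • (cMonomial p I * cMonomialBar p J) := by
  rw [cMonomial_eq_ιMulti, cMonomialBar_eq_ιMulti, ιMulti_mul_ιMulti_comm]

namespace IsConjugation

variable {σ : CForms n → CForms n} (hσ : IsConjugation n σ)
include hσ

def toRingHom : CForms n →+* CForms n where
  toFun := σ
  map_one' := hσ.map_one
  map_mul' := hσ.map_mul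
  map_zero' := by simpa using hσ.map_smul 0 0
  map_add' := hσ.map_add

lemma map_cMonomial (I : IdxC n p) : σ (cMonomial p I) = cMonomialBar p I := by
  change hσ.toRingHom _ = _
  rw [cMonomial, map_list_prod, List.map_ofFn]
  simp [Function.comp_def, toRingHom, hσ.map_du, cMonomialBar]

lemma map_cMonomialBar (I : IdxC n p) : σ (cMonomialBar p I) = cMonomial p I := by
  change hσ.toRingHom _ = _
  rw [cMonomialBar, map_list_prod, List.map_ofFn]
  simp [Function.comp_def, toRingHom, hσ.map_dub, cMonomial]

lemma map_ppForm (c : Matrix (IdxC n p) (IdxC n p) ℂ) :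
    σ (ppForm n p c) = ppForm n p ((-1 : ℂ) ^ (p * p) • cᴴ) := by
  change hσ.toRingHom _ = _
  rw [ppForm_apply, ppForm_apply, Finset.sum_comm]
  simp only [map_sum]
  refine Finset.sum_congr rfl fun I _ => Finset.sum_congr rfl fun J _ => ?_
  change σ _ = _
  rw [hσ.map_smul, hσ.map_mul, hσ.map_cMonomial, hσ.map_cMonomialBar, cMonomialBar_mul_cMonomial,
    smul_smul, Matrix.smul_apply, conjTranspose_apply, smul_eq_mul, mul_comm]
  rfl

lemma map_ppForm_eq_self_iff (c : Matrix (IdxC n p) (IdxC n p) ℂ) :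
    σ (ppForm n p c) = ppForm n p c ↔ (sesqScalar p • c).IsHermitian := by
  rw [hσ.map_ppForm, ppForm_injective.eq_iff, IsHermitian, conjTranspose_smul, star_sesqScalar,
    mul_comm, mul_smul, smul_comm _ (sesqScalar p),
    (smul_right_injective _ (sesqScalar_ne_zero p)).eq_iff]

end IsConjugation

def pForm (n p : ℕ) : (IdxC n p → ℂ) →ₗ[ℂ] CForms n := Fintype.linearCombination ℂ (cMonomial p)

def pFormBar (n p : ℕ) : (IdxC n p → ℂ) →ₗ[ℂ] CForms n :=
  Fintype.linearCombination ℂ (cMonomialBar p)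

lemma pForm_mul_pFormBar (w v : IdxC n p → ℂ) :
    pForm n p w * pFormBar n p v = ppForm n p (vecMulVec w v) := by
  simp only [pForm, pFormBar, Fintype.linearCombination_apply, Finset.sum_mul_sum, ppForm_apply,
    vecMulVec_apply, smul_mul_smul_comm]

def coordEmb (u : Fin n → Fin n ⊕ Fin n) : (Fin n → ℂ) →ₗ[ℂ] (Fin n ⊕ Fin n → ℂ) :=
  Fintype.linearCombination ℂ fun i => Pi.single (u i) 1

lemma coordEmb_single (u : Fin n → Fin n ⊕ Fin n) (i : Fin n) :
    coordEmb u (Pi.single i 1) = Pi.single (u i) 1 := by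
  simp [coordEmb]

lemma cDecomp_eq_ιMulti (a : Fin p → Fin n → ℂ) :
    cDecomp a = ιMulti ℂ p (coordEmb Sum.inl ∘ a) := by
  simp [cDecomp, cOne, cdu, ιMulti_apply, coordEmb, Fintype.linearCombination_apply]

lemma cDecompBar_eq_ιMulti (a : Fin p → Fin n → ℂ) :
    cDecompBar a = ιMulti ℂ p (coordEmb Sum.inr ∘ star a) := by
  simp [cDecompBar, cConjOne, cdub, ιMulti_apply, coordEmb, Fintype.linearCombination_apply]

def plucker (a : Fin p → Fin n → ℂ) (I : IdxC n p) : ℂ :=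
  (Matrix.of fun i j => a i (I.1.orderEmbOfFin I.2 j)).det

lemma plucker_star (a : Fin p → Fin n → ℂ) : plucker (star a) = star (plucker a) := by
  ext I
  exact (RingHom.map_det (starRingEnd ℂ) _).symm

lemma ιMulti_coordEmb_eq_sum (u : Fin n → Fin n ⊕ Fin n) (a : Fin p → Fin n → ℂ) :
    ιMulti ℂ p (coordEmb u ∘ a) =
      ∑ I, plucker a I • ιMulti ℂ p fun j => Pi.single (u (I.1.orderEmbOfFin I.2 j)) 1 := by
  rw [← map_apply_ιMulti, ιMulti_eq_sum_det_smul (Pi.basisFun ℂ (Fin n)), map_sum]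
  refine Finset.sum_congr rfl fun I _ => ?_
  rw [map_smul, map_apply_ιMulti]
  simp [plucker, Function.comp_def, coordEmb_single]

lemma cDecomp_eq_pForm (a : Fin p → Fin n → ℂ) : cDecomp a = pForm n p (plucker a) := by
  rw [cDecomp_eq_ιMulti, ιMulti_coordEmb_eq_sum]
  simp [pForm, Fintype.linearCombination_apply, cMonomial_eq_ιMulti]

lemma cDecompBar_eq_pFormBar (a : Fin p → Fin n → ℂ) :
    cDecompBar a = pFormBar n p (star (plucker a)) := by
  rw [cDecompBar_eq_ιMulti, ιMulti_coordEmb_eq_sum, ← plucker_star]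
  simp [pFormBar, Fintype.linearCombination_apply, cMonomialBar_eq_ιMulti]

lemma exists_eq_ppForm_of_mem_cPosGen {y : CForms n} (hy : y ∈ cPosGen n p) :
    ∃ w : IdxC n p → ℂ, y = ppForm n p (Complex.I ^ (p ^ 2) • vecMulVec w (star w)) := by
  obtain ⟨m, a, rfl⟩ := hy
  refine ⟨∑ l, plucker (a l), ?_⟩
  simp only [cDecomp_eq_pForm, cDecompBar_eq_pFormBar, ← map_sum, star_sum, pForm_mul_pFormBar,
    map_smul]

def basisRows (I : IdxC n p) : Fin p → Fin n → ℂ := fun j => Pi.single (I.1.orderEmbOfFin I.2 j) 1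

lemma cDecomp_basisRows (I : IdxC n p) : cDecomp (basisRows I) = cMonomial p I := by
  simp [cDecomp_eq_ιMulti, cMonomial_eq_ιMulti, basisRows, Function.comp_def, coordEmb_single]

lemma cDecompBar_basisRows (I : IdxC n p) : cDecompBar (basisRows I) = cMonomialBar p I := by
  simp [cDecompBar_eq_ιMulti, cMonomialBar_eq_ιMulti, basisRows, Function.comp_def, coordEmb_single]

lemma cDecomp_update_smul (a : Fin p → Fin n → ℂ) (j : Fin p) (z : ℂ) :
    cDecomp (Function.update a j (z • a j)) = z • cDecomp a := by
  have h := ((ιMulti ℂ p).compLinearMap (coordEmb Sum.inl)).map_update_smul a j z (a j)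
  rw [Function.update_eq_self] at h
  rw [cDecomp_eq_ιMulti, cDecomp_eq_ιMulti]
  exact h

lemma cDecompBar_update_smul (a : Fin p → Fin n → ℂ) (j : Fin p) (z : ℂ) :
    cDecompBar (Function.update a j (z • a j)) = star z • cDecompBar a := by
  have h := ((ιMulti ℂ p).compLinearMap (coordEmb Sum.inr)).map_update_smul (star a) j (star z)
    (star a j)
  rw [Function.update_eq_self, Pi.star_apply, ← star_smul, Function.update_star] at h
  rw [cDecompBar_eq_ιMulti, cDecompBar_eq_ιMulti]
  exact h

lemma exists_smul_mem_cPosGen (w : IdxC n p → ℂ) :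
    ∃ t : ℝ, 0 ≤ t ∧ ∃ y ∈ cPosGen n p,
      ppForm n p (Complex.I ^ (p ^ 2) • vecMulVec w (star w)) = (t : ℂ) • y := by
  cases p with
  | zero =>
    -- The generators of bidegree `(0,0)` are natural numbers, so the weight `|w|²` goes into `t`.
    have : Unique (IdxC n 0) :=
      ⟨⟨⟨∅, rfl⟩⟩, fun I => Subtype.ext (Finset.card_eq_zero.mp I.2)⟩
    refine ⟨Complex.normSq (w default), Complex.normSq_nonneg _, 1,
      ⟨1, fun _ => Fin.elim0, by simp [cDecomp, cDecompBar]⟩, ?_⟩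
    simp [ppForm_apply, cMonomial, cMonomialBar, vecMulVec_apply, Complex.mul_conj]
  | succ k =>
    let e := (Fintype.equivFin (IdxC n (k + 1))).symm
    refine ⟨1, zero_le_one, _, ⟨_, fun l => Function.update (basisRows (e l)) 0
      (w (e l) • basisRows (e l) 0), rfl⟩, ?_⟩
    rw [Complex.ofReal_one, one_smul, map_smul, ← pForm_mul_pFormBar]
    simp only [cDecomp_update_smul, cDecompBar_update_smul, cDecomp_basisRows,
      cDecompBar_basisRows]
    rw [Equiv.sum_comp e (fun I => w I • cMonomial (k + 1) I),
      Equiv.sum_comp e (fun I => star (w I) • cMonomialBar (k + 1) I)]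
    rfl

open scoped ComplexOrder in
lemma ppForm_mem_cPos_iff (c : Matrix (IdxC n p) (IdxC n p) ℂ) :
    ppForm n p c ∈ cPos n p ↔ (sesqScalar p • c).PosSemidef := by
  constructor
  · rintro ⟨m, t, y, ht, hy, hc⟩
    choose w hw using fun k => exists_eq_ppForm_of_mem_cPosGen (hy k)
    have hc' : c = ∑ k, (t k : ℂ) • Complex.I ^ (p ^ 2) • vecMulVec (w k) (star (w k)) :=
      ppForm_injective (by simp only [hc, hw, map_sum, map_smul])
    have hsc : sesqScalar p • c = ∑ k, (t k : ℂ) • vecMulVec (w k) (star (w k)) := by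
      rw [hc', Finset.smul_sum]
      refine Finset.sum_congr rfl fun k _ => ?_
      rw [smul_comm]
      congr 1
      rw [smul_smul, sesqScalar_mul_I_pow, one_smul]
    rw [hsc]
    exact posSemidef_sum _ fun k _ =>
      (posSemidef_vecMulVec_self_star _).smul (Complex.zero_le_real.mpr (ht k))
  · intro h
    obtain ⟨m, v, hv⟩ := posSemidef_iff_eq_sum_vecMulVec.mp h
    choose t ht y hy hty using fun k => exists_smul_mem_cPosGen (v k)
    refine ⟨m, t, y, ht, hy, ?_⟩
    have hc : c = ∑ k, Complex.I ^ (p ^ 2) • vecMulVec (v k) (star (v k)) := by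
      rw [← Finset.smul_sum, ← hv, smul_smul, mul_comm, sesqScalar_mul_I_pow, one_smul]
    rw [hc, map_sum]
    exact Finset.sum_congr rfl fun k _ => hty k

open scoped ComplexOrder in
/-- Proposition 2.4 of Burgos Gil–Gubler–Jell–Künnemann.
Let `η ∈ Λ^{p,p}V*`, written in the standard monomial basis as
`η = Σ_{I,J} c_{IJ} du_I ∧ dū_J`.  The associated sesquilinear form `|η|` on `Λ^p V_ℂ`,
`|η|(x,y) = (-1)^{p(p-1)/2} i^{-p} η(x,ȳ)`, has matrix
`M_{IJ} = (-1)^{p(p-1)/2} (-i)^p c_{IJ}` in the standard basis `(e_I)` of `Λ^p V_ℂ`.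
Then `η` is real (i.e. `σ η = η`) if and only if `|η|` is Hermitian, and `η` is a
positive form if and only if `|η|` is a positive semidefinite Hermitian form. -/
theorem real_iff_hermitian_and_positive_iff_posSemidef
    (n p : ℕ) (σ : CForms n → CForms n) (hσ : IsConjugation n σ)
    (η : CForms n) (c : IdxC n p → IdxC n p → ℂ)
    (hrep : η = ∑ I, ∑ J, c I J • (cMonomial p I * cMonomialBar p J)) :
    (σ η = η ↔ Matrix.IsHermitian
        (Matrix.of fun I J : IdxC n p =>
          ((-1 : ℂ)) ^ (p * (p - 1) / 2) * (-Complex.I) ^ p * c I J)) ∧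
    (η ∈ cPos n p ↔ Matrix.PosSemidef
        (Matrix.of fun I J : IdxC n p =>
          ((-1 : ℂ)) ^ (p * (p - 1) / 2) * (-Complex.I) ^ p * c I J)) := by
  have hη : η = ppForm n p c := hrep
  have hM : Matrix.of (fun I J : IdxC n p =>
      ((-1 : ℂ)) ^ (p * (p - 1) / 2) * (-Complex.I) ^ p * c I J) = sesqScalar p • c := rfl
  rw [hM, hη]
  exact ⟨hσ.map_ppForm_eq_self_iff c, ppForm_mem_cPos_iff c⟩
end
end

section
/- For every p ≥ 0, the complex vector space Λ^{p,p}V* admits a ℂ-basis consisting of strongly positive forms. -/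
/- Setup: `V = ℝⁿ` with its standard basis, `V_ℂ` its complexification,
`V* = Hom_ℝ(V,ℂ)` and `V̄*` the antilinear maps `V_ℂ → ℂ`.  The bigraded exterior algebra
`Λ^{·,·}V* = Λ_ℂ(V* ⊕ V̄*)` is modeled as the exterior algebra over `ℂ` of the free
complex module on the `2n` generators `du_1,…,du_n` (first summand) and
`dū_1,…,dū_n` (second summand). -/

noncomputable section
open ExteriorAlgebra

/-! By polarization, `4 α ∧ β̄ = Σₖ iᵏ (α + iᵏβ) ∧ (α + iᵏβ)‾`, so the forms `α ∧ iᾱ` span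
`V* ∧ V̄*`. Since one-forms anticommute, `(V* ∧ V̄*)ᵖ = (V*)ᵖ ∧ (V̄*)ᵖ = Λ^{p,p}V*`, so the
strongly positive generators span `Λ^{p,p}V*`. This space lies in `Λ^{2p}`, hence is
finite-dimensional, and a maximal linearly independent set of generators is a finite basis. -/

open Pointwise Submodule

theorem Set.mem_range_pow_iff {M α : Type*} [Monoid M] {g : α → M} {p : ℕ} {x : M} :
    x ∈ Set.range g ^ p ↔ ∃ c : Fin p → α, x = (List.ofFn fun j => g (c j)).prod := by
  rw [Set.mem_pow]
  constructor
  · rintro ⟨f, rfl⟩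
    choose c hc using fun j => (f j).2
    exact ⟨c, by simp [hc]⟩
  · rintro ⟨c, rfl⟩
    exact ⟨fun j => ⟨g (c j), c j, rfl⟩, rfl⟩

theorem exists_fin_linearIndependent_subset_span_eq (K : Type*) {V : Type*} [DivisionRing K]
    [AddCommGroup V] [Module K V] (s : Set V) [Module.Finite K (span K s)] :
    ∃ (m : ℕ) (b : Fin m → V), (∀ k, b k ∈ s) ∧ LinearIndependent K b ∧
      span K (Set.range b) = span K s := by
  obtain ⟨t, hts, hspan, hli⟩ := exists_linearIndependent K s
  have : Finite t := by
    refine LinearIndependent.finite (R := K)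
      (f := fun x : t => (⟨x, subset_span (hts x.2)⟩ : span K s)) ?_
    exact .of_comp (span K s).subtype hli
  let e := Finite.equivFin t
  refine ⟨Nat.card t, Subtype.val ∘ e.symm, fun k => hts (e.symm k).2,
    hli.comp _ e.symm.injective, ?_⟩
  rw [EquivLike.range_comp, Subtype.range_coe, hspan]

theorem ExteriorAlgebra.commute_of_le_range_ι {R M : Type*} [CommRing R] [AddCommGroup M]
    [Module R M] {P Q : Submodule R (ExteriorAlgebra R M)}
    (hP : P ≤ LinearMap.range (ι R)) (hQ : Q ≤ LinearMap.range (ι R)) : Commute P Q := by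
  have key : ∀ {P Q : Submodule R (ExteriorAlgebra R M)}, P ≤ LinearMap.range (ι R) →
      Q ≤ LinearMap.range (ι R) → P * Q ≤ Q * P := by
    intro P Q hP hQ
    refine Submodule.mul_le.2 fun x hx y hy => ?_
    obtain ⟨a, rfl⟩ := hP hx
    obtain ⟨b, rfl⟩ := hQ hy
    rw [← neg_eq_of_add_eq_zero_left (ι_add_mul_swap a b)]
    exact neg_mem (mul_mem_mul hy hx)
  exact le_antisymm (key hP hQ) (key hQ hP)

theorem four_smul_mul_eq_polarization {A : Type*} [Ring A] [Algebra ℂ A] (a b c d : A) :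
    (4 : ℂ) • (a * d) = (a + c) * (b + d) + Complex.I • ((a + Complex.I • c) * (b - Complex.I • d))
      - (a - c) * (b - d) - Complex.I • ((a - Complex.I • c) * (b + Complex.I • d)) := by
  simp only [mul_add, add_mul, sub_mul, mul_sub, smul_mul_assoc, mul_smul_comm, smul_smul,
    smul_sub, smul_add]
  match_scalars <;> norm_num [Complex.ext_iff]

theorem subset_realCone {n : ℕ} (S : Set (CForms n)) : S ⊆ realCone S :=
  fun x hx => ⟨1, fun _ => 1, fun _ => x, fun _ => zero_le_one, fun _ => hx, by simp⟩

variable {n : ℕ}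

theorem span_range_cOne_le_range_ι :
    span ℂ (Set.range (cOne (n := n))) ≤ LinearMap.range (ι ℂ) :=
  span_le.2 <| Set.range_subset_iff.2 fun _ => sum_mem fun _ _ => smul_mem _ _ ⟨_, rfl⟩

theorem span_range_cOneBar_le_range_ι :
    span ℂ (Set.range (cOneBar (n := n))) ≤ LinearMap.range (ι ℂ) :=
  span_le.2 <| Set.range_subset_iff.2 fun _ => sum_mem fun _ _ => smul_mem _ _ ⟨_, rfl⟩

theorem cConjOne_eq_cOneBar (c : Fin n → ℂ) : cConjOne c = cOneBar (star c) := rfl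

theorem cOne_add (a b : Fin n → ℂ) : cOne (a + b) = cOne a + cOne b := by
  simp [cOne, add_smul, Finset.sum_add_distrib]

theorem cOne_sub (a b : Fin n → ℂ) : cOne (a - b) = cOne a - cOne b := by
  simp [cOne, sub_smul, Finset.sum_sub_distrib]

theorem cOne_smul (t : ℂ) (a : Fin n → ℂ) : cOne (t • a) = t • cOne a := by
  simp [cOne, smul_smul, Finset.smul_sum]

theorem cConjOne_add (a b : Fin n → ℂ) : cConjOne (a + b) = cConjOne a + cConjOne b := by
  simp [cConjOne, add_smul, Finset.sum_add_distrib]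

theorem cConjOne_sub (a b : Fin n → ℂ) : cConjOne (a - b) = cConjOne a - cConjOne b := by
  simp [cConjOne, sub_smul, Finset.sum_sub_distrib]

theorem cConjOne_smul (t : ℂ) (a : Fin n → ℂ) :
    cConjOne (t • a) = starRingEnd ℂ t • cConjOne a := by
  simp [cConjOne, smul_smul, Finset.smul_sum]

theorem four_smul_cOne_mul_cConjOne (a b : Fin n → ℂ) :
    (4 : ℂ) • (cOne a * cConjOne b) = cOne (a + b) * cConjOne (a + b)
      + Complex.I • (cOne (a + Complex.I • b) * cConjOne (a + Complex.I • b))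
      - cOne (a - b) * cConjOne (a - b)
      - Complex.I • (cOne (a - Complex.I • b) * cConjOne (a - Complex.I • b)) := by
  simp only [cOne_add, cOne_sub, cOne_smul, cConjOne_add, cConjOne_sub, cConjOne_smul,
    Complex.conj_I, neg_smul, sub_neg_eq_add, ← sub_eq_add_neg]
  exact four_smul_mul_eq_polarization ..

theorem span_range_cOne_mul_cConjOne :
    span ℂ (Set.range fun c : Fin n → ℂ => cOne c * cConjOne c) =
      span ℂ (Set.range cOne) * span ℂ (Set.range cOneBar) := by
  set D := span ℂ (Set.range fun c : Fin n → ℂ => cOne c * cConjOne c)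
  refine le_antisymm (span_le.2 ?_) ?_
  · rintro _ ⟨c, rfl⟩
    exact mul_mem_mul (subset_span ⟨c, rfl⟩) (subset_span ⟨star c, rfl⟩)
  rw [span_mul_span, span_le]
  rintro _ ⟨_, ⟨a, rfl⟩, _, ⟨b, rfl⟩, rfl⟩
  have hdiag (c : Fin n → ℂ) : cOne c * cConjOne c ∈ D := subset_span ⟨c, rfl⟩
  have hpolar : (4 : ℂ) • (cOne a * cOneBar b) ∈ D := by
    rw [← star_star b, ← cConjOne_eq_cOneBar, four_smul_cOne_mul_cConjOne]
    exact sub_mem (sub_mem (add_mem (hdiag _) (smul_mem _ _ (hdiag _))) (hdiag _))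
      (smul_mem _ _ (hdiag _))
  simpa using smul_mem D (4 : ℂ)⁻¹ hpolar

theorem CFormsPQ_eq_span_pow_mul (p q : ℕ) :
    CFormsPQ n p q = span ℂ (Set.range cOne) ^ p * span ℂ (Set.range cOneBar) ^ q := by
  rw [span_pow, span_pow, span_mul_span, CFormsPQ]
  congr 1
  ext x
  simp only [Set.mem_ofPred_eq, Set.mem_mul, Set.mem_range_pow_iff]
  constructor
  · rintro ⟨a, b, rfl⟩
    exact ⟨_, ⟨a, rfl⟩, _, ⟨b, rfl⟩, rfl⟩
  · rintro ⟨_, ⟨a, rfl⟩, _, ⟨b, rfl⟩, rfl⟩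
    exact ⟨a, b, rfl⟩

theorem CFormsPQ_le_exteriorPower (p q : ℕ) :
    CFormsPQ n p q ≤ ⋀[ℂ]^(p + q) ((Fin n ⊕ Fin n) → ℂ) := by
  rw [CFormsPQ_eq_span_pow_mul, exteriorPower, pow_add]
  gcongr
  · exact span_range_cOne_le_range_ι
  · exact span_range_cOneBar_le_range_ι

instance (p q : ℕ) : Module.Finite ℂ (CFormsPQ n p q) :=
  Submodule.finiteDimensional_of_le (CFormsPQ_le_exteriorPower p q)

theorem span_cStrongGen (p : ℕ) : span ℂ (cStrongGen n p) = CFormsPQ n p p := by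
  have hgen : cStrongGen n p = (Set.range fun c => cOne c * (Complex.I • cConjOne c)) ^ p := by
    ext
    rw [Set.mem_range_pow_iff]
    rfl
  have hI : span ℂ (Set.range fun c => cOne c * (Complex.I • cConjOne c)) =
      span ℂ (Set.range fun c : Fin n → ℂ => cOne c * cConjOne c) := by
    simp_rw [mul_smul_comm]
    rw [Set.range_smul, span_smul_eq_of_isUnit _ _ (isUnit_iff_ne_zero.2 Complex.I_ne_zero)]
  have hcomm : Commute (span ℂ (Set.range (cOne (n := n)))) (span ℂ (Set.range cOneBar)) :=
    ExteriorAlgebra.commute_of_le_range_ι span_range_cOne_le_range_ι span_range_cOneBar_le_range_ι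
  rw [hgen, ← span_pow, hI, span_range_cOne_mul_cConjOne, hcomm.mul_pow, CFormsPQ_eq_span_pow_mul]

/-- Lemma 2.5; Demailly III.1.4. For every `p ≥ 0`, the complex vector
space `Λ^{p,p}V*` admits a `ℂ`-basis consisting of strongly positive forms: there is a
finite family of strongly positive forms that is `ℂ`-linearly independent and spans
`Λ^{p,p}V*` over `ℂ`. -/
theorem exists_basis_of_stronglyPositive_forms (n p : ℕ) :
    ∃ (m : ℕ) (b : Fin m → CForms n),
      (∀ k, b k ∈ cStrongPos n p) ∧ LinearIndependent ℂ b ∧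
        Submodule.span ℂ (Set.range b) = CFormsPQ n p p := by
  have : Module.Finite ℂ (span ℂ (cStrongGen n p)) := by
    rw [span_cStrongGen]
    infer_instance
  obtain ⟨m, b, hb, hli, hspan⟩ := exists_fin_linearIndependent_subset_span_eq ℂ (cStrongGen n p)
  exact ⟨m, b, fun k => subset_realCone _ (hb k), hli, hspan.trans (span_cStrongGen p)⟩
end
end

section
/- The embedding ι: Λ^{·,·}V' → Λ^{·,·}V* satisfies: (1) its image is exactly the set of F-invariant elements of Λ^{·,·}V*; (2) for every degree-one element ξ ∈ V' ⊕ V'', one has ι(J(ξ)) = i·σ(ι(ξ)); (3) a Lagerberg form ω ∈ Λ^{p,p}V' is symmetric if and only if ι(ω) is real; (4) ι(τ_n) = ω_n. -/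
/- Setup: `V = ℝⁿ` with its standard basis, `V_ℂ` its complexification,
`V* = Hom_ℝ(V,ℂ)` and `V̄*` the antilinear maps `V_ℂ → ℂ`.  The bigraded exterior algebra
`Λ^{·,·}V* = Λ_ℂ(V* ⊕ V̄*)` is modeled as the exterior algebra over `ℂ` of the free
complex module on the `2n` generators `du_1,…,du_n` (first summand) and
`dū_1,…,dū_n` (second summand). -/

noncomputable section
open ExteriorAlgebra

/-- The algebra `Λ^{·,·}V' = Λ_ℝ(V' ⊕ V'')` of Lagerberg forms for `V = ℝⁿ`. -/
abbrev LForms (n : ℕ) : Type := ExteriorAlgebra ℝ ((Fin n ⊕ Fin n) → ℝ)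

/-- The basis element `d'u_i` of `V'`. -/
def ldu {n : ℕ} (i : Fin n) : LForms n := ExteriorAlgebra.ι ℝ (Pi.single (Sum.inl i) (1 : ℝ))

/-- The basis element `d''u_i` of `V''`. -/
def lddu {n : ℕ} (i : Fin n) : LForms n := ExteriorAlgebra.ι ℝ (Pi.single (Sum.inr i) (1 : ℝ))

/-- A general element `Σ cᵢ • d'u_i` of `V'`. -/
def lOne {n : ℕ} (c : Fin n → ℝ) : LForms n := ∑ i, c i • ldu i

/-- A general element `Σ cᵢ • d''u_i` of `V''`; note `J(Σ cᵢ d'u_i) = Σ cᵢ d''u_i`. -/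
def lOne'' {n : ℕ} (c : Fin n → ℝ) : LForms n := ∑ i, c i • lddu i

/-- A decomposable `(p,0)`-form `α₁ ∧ … ∧ α_p` with `α_j ∈ V'`. -/
def lDecomp {n p : ℕ} (c : Fin p → Fin n → ℝ) : LForms n := (List.ofFn fun j => lOne (c j)).prod

/-- Its image `J(α₁) ∧ … ∧ J(α_p)` under the Lagerberg involution. -/
def lDecomp'' {n p : ℕ} (c : Fin p → Fin n → ℝ) : LForms n :=
  (List.ofFn fun j => lOne'' (c j)).prod

/-- `Λ^{p,q}V'`: the span of products of `p` elements of `V'` and `q` elements of `V''`. -/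
def LFormsPQ (n p q : ℕ) : Submodule ℝ (LForms n) :=
  Submodule.span ℝ { x | ∃ (a : Fin p → Fin n → ℝ) (b : Fin q → Fin n → ℝ),
    x = lDecomp a * lDecomp'' b }

/-- The convex cone generated by a set `S` (nonnegative real coefficients). -/
def lCone {n : ℕ} (S : Set (LForms n)) : Set (LForms n) :=
  { x | ∃ (m : ℕ) (t : Fin m → ℝ) (y : Fin m → LForms n),
      (∀ k, 0 ≤ t k) ∧ (∀ k, y k ∈ S) ∧ x = ∑ k, t k • y k }

/-- The generators `α₁ ∧ J(α₁) ∧ … ∧ α_p ∧ J(α_p)` (`α_j ∈ V'`) of the strongly positive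
cone. -/
def lStrongGen (n p : ℕ) : Set (LForms n) :=
  { x | ∃ c : Fin p → Fin n → ℝ, x = (List.ofFn fun j => lOne (c j) * lOne'' (c j)).prod }

/-- The cone `Λ^{p,p}_{+,s}V'` of strongly positive Lagerberg `(p,p)`-forms. -/
def lStrongPos (n p : ℕ) : Set (LForms n) := lCone (lStrongGen n p)

/-- The generators `(-1)^{p(p-1)/2} α ∧ J(α)` (`α ∈ Λ^{p,0}V'`, written as a sum of
decomposables) of the positive cone. -/
def lPosGen (n p : ℕ) : Set (LForms n) :=
  { x | ∃ (m : ℕ) (c : Fin m → Fin p → Fin n → ℝ),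
      x = ((-1 : ℝ)) ^ (p * (p - 1) / 2) • ((∑ l, lDecomp (c l)) * (∑ l, lDecomp'' (c l))) }

/-- The cone `Λ^{p,p}_{+}V'` of positive Lagerberg `(p,p)`-forms. -/
def lPos (n p : ℕ) : Set (LForms n) := lCone (lPosGen n p)

/-- The Lagerberg orientation form `τ_n = d'u_1 ∧ d''u_1 ∧ … ∧ d'u_n ∧ d''u_n`. -/
def lTauTop (n : ℕ) : LForms n := (List.ofFn fun i : Fin n => ldu i * lddu i).prod

/-- `J` is the Lagerberg involution: the (unique) ℝ-algebra automorphism of `Λ^{·,·}V'`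
with `J(d'u_i) = d''u_i` and `J(d''u_i) = d'u_i`. -/
structure IsLagerbergJ (n : ℕ) (J : LForms n → LForms n) : Prop where
  map_add : ∀ x y, J (x + y) = J x + J y
  map_smul : ∀ (c : ℝ) (x), J (c • x) = c • J x
  map_mul : ∀ x y, J (x * y) = J x * J y
  map_one : J 1 = 1
  map_du : ∀ i : Fin n, J (ldu i) = lddu i
  map_ddu : ∀ i : Fin n, J (lddu i) = ldu i

/-- The set `Λ^{p,p}_{sym}V'` of symmetric Lagerberg `(p,p)`-forms:
those with `J(ω) = (-1)^p ω`. -/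
def lSym (n p : ℕ) (J : LForms n → LForms n) : Set (LForms n) :=
  { x | x ∈ LFormsPQ n p p ∧ J x = ((-1 : ℝ)) ^ p • x }

/-- The set `Λ^{p,p}_{+,w}V'` of weakly positive Lagerberg `(p,p)`-forms: symmetric
`(p,p)`-forms `ω` such that for every strongly positive `η` of type `(n-p,n-p)` there is a
real `γ ≥ 0` with `ω ∧ η = γ τ_n`. -/
def lWeakPos (n p : ℕ) (J : LForms n → LForms n) : Set (LForms n) :=
  { x | x ∈ lSym n p J ∧
      ∀ η ∈ lStrongPos n (n - p), ∃ γ : ℝ, 0 ≤ γ ∧ x * η = γ • lTauTop n }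

/-- `ι` is the canonical embedding `Λ^{·,·}V' → Λ^{·,·}V*`: the (unique) ℝ-algebra
homomorphism with `ι(d'u_j) = du_j` and `ι(d''u_j) = i dū_j`.  Its image is the set of
`F`-invariant complex forms. -/
structure IsIota (n : ℕ) (ι : LForms n → CForms n) : Prop where
  map_add : ∀ x y, ι (x + y) = ι x + ι y
  map_smul : ∀ (c : ℝ) (x), ι (c • x) = (c : ℂ) • ι x
  map_mul : ∀ x y, ι (x * y) = ι x * ι y
  map_one : ι 1 = 1
  map_du : ∀ i : Fin n, ι (ldu i) = cdu i
  map_ddu : ∀ i : Fin n, ι (lddu i) = Complex.I • cdub i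

/-!
Base change identifies `Λ^{·,·}V*` with `ℂ ⊗_ℝ Λ^{·,·}V'`, through the complexification of
the generators that sends `d'u_j ↦ du_j` and `d''u_j ↦ i dū_j`; under this identification `ι`
is `x ↦ 1 ⊗ x`. Hence `ι` is injective and every complex form is `ι a + i ι b`. Since `F` fixes
the image of `ι` (check on generators) and is antilinear, `F (ι a + i ι b) = ι a - i ι b`, which
gives (1). The maps `σ ∘ ι` and `ι ∘ J` are both multiplicative and differ by the factor `-i` on
degree-one forms (this is (2)), so they differ by `(-i)^(p+q)` on `(p,q)`-forms; for `p = q` the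
factor is `(-1)^p`, and injectivity of `ι` gives (3).
-/

open TensorProduct

theorem TensorProduct.exists_eq_one_tmul_add_I_tmul {M : Type*} [AddCommGroup M] [Module ℝ M]
    (y : ℂ ⊗[ℝ] M) : ∃ a b : M, y = (1 : ℂ) ⊗ₜ a + Complex.I ⊗ₜ b := by
  induction y with
  | zero => exact ⟨0, 0, by simp⟩
  | tmul c m =>
    refine ⟨c.re • m, c.im • m, ?_⟩
    rw [tmul_smul, tmul_smul, smul_tmul', smul_tmul', ← add_tmul]
    congr 1
    apply Complex.ext <;> simp
  | add y z hy hz =>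
    obtain ⟨a, b, rfl⟩ := hy
    obtain ⟨a', b', rfl⟩ := hz
    exact ⟨a + a', b + b', by simp only [tmul_add]; abel⟩

theorem map_list_prod_eq_pow_length_smul {M N R F : Type*} [Monoid M] [Monoid N] [Monoid R]
    [MulAction R N] [IsScalarTower R N N] [SMulCommClass R N N] [FunLike F M N]
    [MonoidHomClass F M N] {f g : F} {c : R} :
    ∀ l : List M, (∀ x ∈ l, f x = c • g x) → f l.prod = c ^ l.length • g l.prod
  | [], _ => by simp
  | x :: l, h => by
    rw [List.prod_cons, map_mul, map_mul, h x List.mem_cons_self,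
      map_list_prod_eq_pow_length_smul l fun y hy => h y (List.mem_cons_of_mem x hy),
      smul_mul_smul_comm, List.length_cons, pow_succ']

namespace LForms

section Generators

variable {n : ℕ}

theorem algHom_ext {A : Type*} [Semiring A] [Algebra ℝ A] {f g : LForms n →ₐ[ℝ] A}
    (hdu : ∀ i, f (ldu i) = g (ldu i)) (hddu : ∀ i, f (lddu i) = g (lddu i)) : f = g :=
  ExteriorAlgebra.hom_ext <| LinearMap.pi_ext' fun j => LinearMap.ext_ring <| by
    cases j with
    | inl i => exact hdu i
    | inr i => exact hddu i

theorem lOne_mem_span (c : Fin n → ℝ) :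
    lOne c ∈ Submodule.span ℝ (Set.range (ldu (n := n)) ∪ Set.range (lddu (n := n))) :=
  Submodule.sum_mem _ fun i _ => Submodule.smul_mem _ _ (Submodule.subset_span (.inl ⟨i, rfl⟩))

theorem lOne''_mem_span (c : Fin n → ℝ) :
    lOne'' c ∈ Submodule.span ℝ (Set.range (ldu (n := n)) ∪ Set.range (lddu (n := n))) :=
  Submodule.sum_mem _ fun i _ => Submodule.smul_mem _ _ (Submodule.subset_span (.inr ⟨i, rfl⟩))

end Generators

variable (n : ℕ)

def twistWeight : Fin n ⊕ Fin n → ℂ := Sum.elim (fun _ => 1) (fun _ => Complex.I)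

def complexifyEquiv : ℂ ⊗[ℝ] ((Fin n ⊕ Fin n) → ℝ) ≃ₗ[ℂ] ((Fin n ⊕ Fin n) → ℂ) :=
  piScalarRight ℝ ℂ ℂ (Fin n ⊕ Fin n) ≪≫ₗ LinearEquiv.piCongrRight fun j =>
    LinearEquiv.smulOfNeZero ℂ ℂ (twistWeight n j) (by cases j <;> simp [twistWeight])

theorem complexifyEquiv_one_tmul_single (j : Fin n ⊕ Fin n) :
    complexifyEquiv n (1 ⊗ₜ Pi.single j 1) = Pi.single j (twistWeight n j) := by
  ext k
  by_cases h : k = j <;> simp [complexifyEquiv, h]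

def complexifyIsometry :
    ((0 : QuadraticForm ℝ ((Fin n ⊕ Fin n) → ℝ)).baseChange ℂ).IsometryEquiv
      (0 : QuadraticForm ℂ ((Fin n ⊕ Fin n) → ℂ)) where
  toLinearEquiv := complexifyEquiv n
  map_app' x := by
    have : (0 : QuadraticForm ℝ ((Fin n ⊕ Fin n) → ℝ)).baseChange ℂ = 0 := by ext; simp
    simp [this]

def baseChangeEquiv : CForms n ≃ₐ[ℂ] ℂ ⊗[ℝ] LForms n :=
  (CliffordAlgebra.equivOfIsometry (complexifyIsometry n)).symm.trans
    (CliffordAlgebra.equivBaseChange ℂ _)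

def iotaModel : LForms n →ₐ[ℝ] CForms n :=
  ((baseChangeEquiv n).symm.toAlgHom.restrictScalars ℝ).comp Algebra.TensorProduct.includeRight

theorem iotaModel_injective : Function.Injective (iotaModel n) :=
  (baseChangeEquiv n).symm.injective.comp
    (Algebra.TensorProduct.includeRight_injective (algebraMap ℝ ℂ).injective)

theorem iotaModel_ι (v : (Fin n ⊕ Fin n) → ℝ) :
    iotaModel n (ExteriorAlgebra.ι ℝ v) = ExteriorAlgebra.ι ℂ (complexifyEquiv n (1 ⊗ₜ v)) := by
  simp only [iotaModel, baseChangeEquiv, AlgHom.coe_comp, AlgHom.coe_restrictScalars',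
    AlgEquiv.coe_toAlgHom, Function.comp_apply, Algebra.TensorProduct.includeRight_apply,
    AlgEquiv.symm_trans_apply, CliffordAlgebra.equivBaseChange_symm_apply,
    CliffordAlgebra.ofBaseChange_tmul_ι, CliffordAlgebra.equivOfIsometry_symm,
    CliffordAlgebra.equivOfIsometry_apply, CliffordAlgebra.map_apply_ι]
  rfl

theorem iotaModel_ldu (i : Fin n) : iotaModel n (ldu i) = cdu i := by
  rw [ldu, iotaModel_ι, complexifyEquiv_one_tmul_single]
  rfl

theorem iotaModel_lddu (i : Fin n) : iotaModel n (lddu i) = Complex.I • cdub i := by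
  rw [lddu, iotaModel_ι, complexifyEquiv_one_tmul_single, cdub, ← map_smul,
    ← Pi.single_smul', smul_eq_mul, mul_one]
  rfl

theorem exists_eq_iotaModel_add_I_smul (x : CForms n) :
    ∃ a b, x = iotaModel n a + Complex.I • iotaModel n b := by
  obtain ⟨a, b, h⟩ := exists_eq_one_tmul_add_I_tmul (baseChangeEquiv n x)
  refine ⟨a, b, ?_⟩
  have hI : Complex.I ⊗ₜ[ℝ] b = Complex.I • (1 : ℂ) ⊗ₜ[ℝ] b := by
    rw [smul_tmul', smul_eq_mul, mul_one]
  rw [← (baseChangeEquiv n).symm_apply_apply x, h, hI, map_add, map_smul]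
  rfl

end LForms

section Iota

variable {n : ℕ} {σ F : CForms n → CForms n} {J : LForms n → LForms n}
  {ι : LForms n → CForms n}

def IsIota.toAlgHom (hι : IsIota n ι) : LForms n →ₐ[ℝ] CForms n where
  toFun := ι
  map_one' := hι.map_one
  map_mul' := hι.map_mul
  map_zero' := by simpa using hι.map_smul 0 0
  map_add' := hι.map_add
  commutes' r := by
    simp only [Algebra.algebraMap_eq_smul_one, hι.map_smul, hι.map_one, Complex.coe_smul]

def IsLagerbergJ.toAlgHom (hJ : IsLagerbergJ n J) : LForms n →ₐ[ℝ] LForms n where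
  toFun := J
  map_one' := hJ.map_one
  map_mul' := hJ.map_mul
  map_zero' := by simpa using hJ.map_smul 0 0
  map_add' := hJ.map_add
  commutes' r := by simp only [Algebra.algebraMap_eq_smul_one, hJ.map_smul, hJ.map_one]

def IsConjugation.toAlgHom (hσ : IsConjugation n σ) : CForms n →ₐ[ℝ] CForms n where
  toFun := σ
  map_one' := hσ.map_one
  map_mul' := hσ.map_mul
  map_zero' := by simpa using hσ.map_smul 0 0
  map_add' := hσ.map_add
  commutes' r := by
    simp only [Algebra.algebraMap_eq_smul_one, ← Complex.coe_smul, hσ.map_smul, hσ.map_one,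
      Complex.conj_ofReal]

def IsFInvolution.toAlgHom (hF : IsFInvolution n F) : CForms n →ₐ[ℝ] CForms n where
  toFun := F
  map_one' := hF.map_one
  map_mul' := hF.map_mul
  map_zero' := by simpa using hF.map_smul 0 0
  map_add' := hF.map_add
  commutes' r := by
    simp only [Algebra.algebraMap_eq_smul_one, ← Complex.coe_smul, hF.map_smul, hF.map_one,
      Complex.conj_ofReal]

@[simp] theorem IsIota.coe_toAlgHom (hι : IsIota n ι) : ⇑hι.toAlgHom = ι := rfl
@[simp] theorem IsLagerbergJ.coe_toAlgHom (hJ : IsLagerbergJ n J) : ⇑hJ.toAlgHom = J := rfl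
@[simp] theorem IsConjugation.coe_toAlgHom (hσ : IsConjugation n σ) : ⇑hσ.toAlgHom = σ := rfl
@[simp] theorem IsFInvolution.coe_toAlgHom (hF : IsFInvolution n F) : ⇑hF.toAlgHom = F := rfl

theorem IsIota.toAlgHom_eq_iotaModel (hι : IsIota n ι) : hι.toAlgHom = LForms.iotaModel n :=
  LForms.algHom_ext (fun i => by simp [hι.map_du, LForms.iotaModel_ldu])
    (fun i => by simp [hι.map_ddu, LForms.iotaModel_lddu])

theorem IsIota.injective (hι : IsIota n ι) : Function.Injective ι := by
  rw [← hι.coe_toAlgHom, hι.toAlgHom_eq_iotaModel]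
  exact LForms.iotaModel_injective n

theorem IsIota.exists_eq_add_I_smul (hι : IsIota n ι) (x : CForms n) :
    ∃ a b, x = ι a + Complex.I • ι b := by
  obtain ⟨a, b, h⟩ := LForms.exists_eq_iotaModel_add_I_smul n x
  exact ⟨a, b, by rw [h, ← hι.toAlgHom_eq_iotaModel, hι.coe_toAlgHom]⟩

theorem IsFInvolution.apply_iota (hF : IsFInvolution n F) (hι : IsIota n ι) (x : LForms n) :
    F (ι x) = ι x := by
  have : hF.toAlgHom.comp hι.toAlgHom = hι.toAlgHom :=
    LForms.algHom_ext (fun i => by simp [hι.map_du, hF.map_du])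
      (fun i => by simp [hι.map_ddu, hF.map_smul, hF.map_dub])
  exact congr($this x)

theorem IsIota.range_eq_fixedPoints (hF : IsFInvolution n F) (hι : IsIota n ι) :
    Set.range ι = { x | F x = x } := by
  ext x
  refine ⟨by rintro ⟨y, rfl⟩; exact hF.apply_iota hι y, fun (hx : F x = x) => ?_⟩
  obtain ⟨a, b, rfl⟩ := hι.exists_eq_add_I_smul x
  have hFx : F (ι a + Complex.I • ι b) = ι a - Complex.I • ι b := by
    simp [hF.map_add, hF.map_smul, hF.apply_iota hι, sub_eq_add_neg]
  rw [hFx] at hx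
  have hb : (2 : ℂ) • Complex.I • ι b = 0 := by linear_combination (norm := module) -hx
  rw [smul_eq_zero, or_iff_right two_ne_zero] at hb
  exact ⟨a, by rw [hb, add_zero]⟩

theorem IsIota.apply_J_eq_I_smul_conj (hσ : IsConjugation n σ) (hJ : IsLagerbergJ n J)
    (hι : IsIota n ι) :
    ∀ ξ ∈ Submodule.span ℝ (Set.range (ldu (n := n)) ∪ Set.range (lddu (n := n))),
      ι (J ξ) = Complex.I • σ (ι ξ) := by
  refine LinearMap.eqOn_span' (f := (hι.toAlgHom.comp hJ.toAlgHom).toLinearMap)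
    (g := Complex.I • (hσ.toAlgHom.comp hι.toAlgHom).toLinearMap) ?_
  rintro _ (⟨i, rfl⟩ | ⟨i, rfl⟩)
  · simp [hJ.map_du, hι.map_ddu, hι.map_du, hσ.map_du]
  · simp [hJ.map_ddu, hι.map_ddu, hι.map_du, hσ.map_smul, hσ.map_dub, smul_smul]

theorem IsIota.conj_apply_eq_neg_I_smul (hσ : IsConjugation n σ) (hJ : IsLagerbergJ n J)
    (hι : IsIota n ι) {ξ : LForms n}
    (hξ : ξ ∈ Submodule.span ℝ (Set.range (ldu (n := n)) ∪ Set.range (lddu (n := n)))) :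
    σ (ι ξ) = -Complex.I • ι (J ξ) := by
  rw [hι.apply_J_eq_I_smul_conj hσ hJ ξ hξ, smul_smul, neg_mul, Complex.I_mul_I, neg_neg,
    one_smul]

theorem IsIota.conj_apply_of_mem_LFormsPQ (hσ : IsConjugation n σ) (hJ : IsLagerbergJ n J)
    (hι : IsIota n ι) {p q : ℕ} :
    ∀ ω ∈ LFormsPQ n p q, σ (ι ω) = (-Complex.I) ^ (p + q) • ι (J ω) := by
  refine LinearMap.eqOn_span' (f := (hσ.toAlgHom.comp hι.toAlgHom).toLinearMap)
    (g := (-Complex.I) ^ (p + q) • (hι.toAlgHom.comp hJ.toAlgHom).toLinearMap) ?_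
  rintro _ ⟨a, b, rfl⟩
  have hprod : lDecomp a * lDecomp'' b =
      (List.ofFn (fun j => lOne (a j)) ++ List.ofFn (fun j => lOne'' (b j))).prod := by
    rw [List.prod_append]
    rfl
  have hdeg : ∀ ξ ∈ List.ofFn (fun j => lOne (a j)) ++ List.ofFn (fun j => lOne'' (b j)),
      (hσ.toAlgHom.comp hι.toAlgHom) ξ = -Complex.I • (hι.toAlgHom.comp hJ.toAlgHom) ξ := by
    simp only [List.mem_append, List.mem_ofFn]
    rintro _ (⟨j, rfl⟩ | ⟨j, rfl⟩)
    · exact hι.conj_apply_eq_neg_I_smul hσ hJ (LForms.lOne_mem_span (a j))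
    · exact hι.conj_apply_eq_neg_I_smul hσ hJ (LForms.lOne''_mem_span (b j))
  simpa [hprod] using map_list_prod_eq_pow_length_smul _ hdeg

theorem IsIota.J_eq_neg_one_pow_smul_iff (hσ : IsConjugation n σ) (hJ : IsLagerbergJ n J)
    (hι : IsIota n ι) {p : ℕ} {ω : LForms n} (hω : ω ∈ LFormsPQ n p p) :
    J ω = (-1 : ℝ) ^ p • ω ↔ σ (ι ω) = ι ω := by
  have hsign : Function.Involutive fun x : LForms n => (-1 : ℝ) ^ p • x := fun x => by
    simp only [smul_smul, ← mul_pow, neg_one_mul, neg_neg, one_pow, one_smul]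
  have hconj : σ (ι ω) = ι ((-1 : ℝ) ^ p • J ω) := by
    rw [hι.conj_apply_of_mem_LFormsPQ hσ hJ ω hω, hι.map_smul, ← two_mul, pow_mul, neg_sq,
      Complex.I_sq]
    push_cast
    rfl
  rw [hconj, hι.injective.eq_iff, hsign.eq_iff]

theorem IsIota.apply_lTauTop (hι : IsIota n ι) : ι (lTauTop n) = cOmegaTop n := by
  have hfactor : hι.toAlgHom ∘ (fun i => ldu i * lddu i) = fun i => cdu i * Complex.I • cdub i :=
    funext fun i => by simp [hι.map_mul, hι.map_du, hι.map_ddu]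
  rw [lTauTop, cOmegaTop, ← hι.coe_toAlgHom, map_list_prod, List.map_ofFn, hfactor]

end Iota

/-- Proposition 2.13. Properties of the embedding
`ι : Λ^{·,·}V' → Λ^{·,·}V*`:
(1) its image is exactly the set of `F`-invariant elements of `Λ^{·,·}V*`;
(2) for every degree-one element `ξ ∈ V' ⊕ V''`, one has `ι(J(ξ)) = i · σ(ι(ξ))`;
(3) a Lagerberg `(p,p)`-form `ω` is symmetric if and only if `ι(ω)` is real;
(4) `ι(τ_n) = ω_n`. -/
theorem iota_properties (n : ℕ)
    (σ : CForms n → CForms n) (hσ : IsConjugation n σ)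
    (F : CForms n → CForms n) (hF : IsFInvolution n F)
    (J : LForms n → LForms n) (hJ : IsLagerbergJ n J)
    (ι : LForms n → CForms n) (hι : IsIota n ι) :
    Set.range ι = { x : CForms n | F x = x } ∧
    (∀ ξ ∈ Submodule.span ℝ (Set.range (ldu (n := n)) ∪ Set.range (lddu (n := n))),
      ι (J ξ) = Complex.I • σ (ι ξ)) ∧
    (∀ (p : ℕ), ∀ ω ∈ LFormsPQ n p p,
      (J ω = ((-1 : ℝ)) ^ p • ω ↔ σ (ι ω) = ι ω)) ∧
    ι (lTauTop n) = cOmegaTop n :=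
  ⟨hι.range_eq_fixedPoints hF, hι.apply_J_eq_I_smul_conj hσ hJ,
    fun _ _ hω => hι.J_eq_neg_one_pow_smul_iff hσ hJ hω, hι.apply_lTauTop⟩
end
end

section
/- The involution F of Λ^{·,·}V* maps strongly positive (p,p)-forms to strongly positive forms, positive forms to positive forms, and weakly positive forms to weakly positive forms. -/
/- Setup: `V = ℝⁿ` with its standard basis, `V_ℂ` its complexification,
`V* = Hom_ℝ(V,ℂ)` and `V̄*` the antilinear maps `V_ℂ → ℂ`.  The bigraded exterior algebra
`Λ^{·,·}V* = Λ_ℂ(V* ⊕ V̄*)` is modeled as the exterior algebra over `ℂ` of the free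
complex module on the `2n` generators `du_1,…,du_n` (first summand) and
`dū_1,…,dū_n` (second summand). -/

noncomputable section
open ExteriorAlgebra

/-! `F` is a conjugate-linear ring automorphism sending each one-form `α = Σ cᵢ du_i` to
`α' = Σ c̄ᵢ du_i` and `ᾱ` to `-ᾱ'`. Hence it permutes the generators
`α₁ ∧ iᾱ₁ ∧ … ∧ α_p ∧ iᾱ_p` of the strongly positive cone (the two signs from `ī = -i` and
`F ᾱ = -ᾱ'` cancel), and sends `i^{p²} α ∧ ᾱ` to `(-i)^{p²} (-1)^p α' ∧ ᾱ' = i^{p²} α' ∧ ᾱ'`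
since `p² + p` is even. Being real-linear, it preserves the cones they generate. For weak
positivity, `F` fixes `ω_n` and is an involution, so `F ω ∧ η = F (ω ∧ F η) = γ ω_n`. -/

lemma List.prod_ofFn_neg {R A : Type*} [CommRing R] [Ring A] [Algebra R A] {p : ℕ}
    (g : Fin p → A) : (List.ofFn fun j => -g j).prod = ((-1 : R) ^ p) • (List.ofFn g).prod := by
  rw [show (List.ofFn fun j => -g j) = (List.ofFn g).map Neg.neg from (List.map_ofFn ..).symm,
    List.prod_map_neg, List.length_ofFn, Algebra.smul_def, map_pow, map_neg, map_one]

lemma conj_I_pow_sq_mul_neg_one_pow (p : ℕ) :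
    starRingEnd ℂ Complex.I ^ (p ^ 2) * (-1) ^ p = Complex.I ^ (p ^ 2) := by
  have hEven : Even (p ^ 2 + p) := by
    rw [show p ^ 2 + p = p * (p + 1) by ring]
    exact Nat.even_mul_succ_self p
  rw [Complex.conj_I, neg_pow, mul_right_comm, ← pow_add, hEven.neg_one_pow, one_mul]

namespace IsFInvolution

variable {n : ℕ} {F : CForms n → CForms n}

lemma map_zero (hF : IsFInvolution n F) : F 0 = 0 := by
  simpa using hF.map_smul 0 0

def toRingHom (hF : IsFInvolution n F) : CForms n →+* CForms n where
  toFun := F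
  map_one' := hF.map_one
  map_mul' := hF.map_mul
  map_zero' := hF.map_zero
  map_add' := hF.map_add

lemma map_sum (hF : IsFInvolution n F) {ι : Type*} (s : Finset ι) (f : ι → CForms n) :
    F (∑ i ∈ s, f i) = ∑ i ∈ s, F (f i) :=
  _root_.map_sum hF.toRingHom f s

lemma map_prod_ofFn (hF : IsFInvolution n F) {p : ℕ} (g : Fin p → CForms n) :
    F (List.ofFn g).prod = (List.ofFn fun j => F (g j)).prod := by
  rw [show (List.ofFn fun j => F (g j)) = (List.ofFn g).map F from (List.map_ofFn ..).symm]
  exact map_list_prod hF.toRingHom _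

lemma map_neg (hF : IsFInvolution n F) (x : CForms n) : F (-x) = -F x :=
  _root_.map_neg hF.toRingHom x

lemma map_ofReal_smul (hF : IsFInvolution n F) (t : ℝ) (x : CForms n) :
    F ((t : ℂ) • x) = (t : ℂ) • F x := by
  rw [hF.map_smul, Complex.conj_ofReal]

lemma map_cOne (hF : IsFInvolution n F) (c : Fin n → ℂ) :
    F (cOne c) = cOne (fun i => starRingEnd ℂ (c i)) := by
  simp only [cOne, hF.map_sum, hF.map_smul, hF.map_du]

lemma map_cConjOne (hF : IsFInvolution n F) (c : Fin n → ℂ) :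
    F (cConjOne c) = -cConjOne (fun i => starRingEnd ℂ (c i)) := by
  simp only [cConjOne, hF.map_sum, hF.map_smul, hF.map_dub, smul_neg, Finset.sum_neg_distrib]

lemma map_cOneBar (hF : IsFInvolution n F) (c : Fin n → ℂ) :
    F (cOneBar c) = -cOneBar (fun i => starRingEnd ℂ (c i)) := by
  simp only [cOneBar, hF.map_sum, hF.map_smul, hF.map_dub, smul_neg, Finset.sum_neg_distrib]

lemma map_cDecomp (hF : IsFInvolution n F) {p : ℕ} (c : Fin p → Fin n → ℂ) :
    F (cDecomp c) = cDecomp (fun j i => starRingEnd ℂ (c j i)) := by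
  simp only [cDecomp, hF.map_prod_ofFn, hF.map_cOne]

lemma map_cDecompBar (hF : IsFInvolution n F) {p : ℕ} (c : Fin p → Fin n → ℂ) :
    F (cDecompBar c) = ((-1 : ℂ) ^ p) • cDecompBar (fun j i => starRingEnd ℂ (c j i)) := by
  simp only [cDecompBar, hF.map_prod_ofFn, hF.map_cConjOne, List.prod_ofFn_neg (R := ℂ)]

lemma map_prod_cOneBar (hF : IsFInvolution n F) {q : ℕ} (b : Fin q → Fin n → ℂ) :
    F (List.ofFn fun j => cOneBar (b j)).prod =
      ((-1 : ℂ) ^ q) • (List.ofFn fun j => cOneBar fun i => starRingEnd ℂ (b j i)).prod := by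
  simp only [hF.map_prod_ofFn, hF.map_cOneBar, List.prod_ofFn_neg (R := ℂ)]

lemma map_cOmegaTop (hF : IsFInvolution n F) : F (cOmegaTop n) = cOmegaTop n := by
  simp only [cOmegaTop, hF.map_prod_ofFn, hF.map_mul, hF.map_smul, hF.map_du, hF.map_dub,
    Complex.conj_I, neg_smul, smul_neg, neg_neg]

theorem involutive (hF : IsFInvolution n F) : Function.Involutive F := by
  let G : CForms n →ₐ[ℂ] CForms n :=
    { toFun := F ∘ F
      map_one' := by simp only [Function.comp_apply, hF.map_one]
      map_mul' := fun x y => by simp only [Function.comp_apply, hF.map_mul]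
      map_zero' := by simp only [Function.comp_apply, hF.map_zero]
      map_add' := fun x y => by simp only [Function.comp_apply, hF.map_add]
      commutes' := fun c => by
        simp only [Function.comp_apply, Algebra.algebraMap_eq_smul_one, hF.map_smul,
          hF.map_one, Complex.conj_conj] }
  have hG : G = AlgHom.id ℂ (CForms n) := by
    refine ExteriorAlgebra.hom_ext (LinearMap.pi_ext fun i x => ?_)
    rw [← mul_one x, ← smul_eq_mul, Pi.single_smul]
    rcases i with j | j
    all_goals
      simp only [LinearMap.coe_comp, Function.comp_apply, AlgHom.toLinearMap_apply,
        AlgHom.coe_id, id]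
      show F (F _) = _
      rw [LinearMap.map_smul]
    · rw [← cdu, hF.map_smul, hF.map_smul, hF.map_du, hF.map_du, Complex.conj_conj]
    · rw [← cdub, hF.map_smul, hF.map_smul, hF.map_dub, hF.map_neg, hF.map_dub, neg_neg,
        Complex.conj_conj]
  exact fun x => congrArg (· x) hG

lemma mapsTo_realCone (hF : IsFInvolution n F) {S T : Set (CForms n)}
    (hST : Set.MapsTo F S T) : Set.MapsTo F (realCone S) (realCone T) := by
  rintro x ⟨m, t, y, ht, hy, rfl⟩
  refine ⟨m, t, fun k => F (y k), ht, fun k => hST (hy k), ?_⟩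
  simp only [hF.map_sum, hF.map_ofReal_smul]

lemma map_strongGenerator (hF : IsFInvolution n F) {p : ℕ} (c : Fin p → Fin n → ℂ) :
    F (List.ofFn fun j => cOne (c j) * (Complex.I • cConjOne (c j))).prod =
      (List.ofFn fun j => cOne (fun i => starRingEnd ℂ (c j i)) *
        (Complex.I • cConjOne (fun i => starRingEnd ℂ (c j i)))).prod := by
  simp only [hF.map_prod_ofFn, hF.map_mul, hF.map_smul, hF.map_cOne, hF.map_cConjOne,
    Complex.conj_I, neg_smul, smul_neg, neg_neg]

lemma mapsTo_cStrongGen (hF : IsFInvolution n F) (p : ℕ) :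
    Set.MapsTo F (cStrongGen n p) (cStrongGen n p) := by
  rintro _ ⟨c, rfl⟩
  exact ⟨_, hF.map_strongGenerator c⟩

lemma mapsTo_cPosGen (hF : IsFInvolution n F) (p : ℕ) :
    Set.MapsTo F (cPosGen n p) (cPosGen n p) := by
  rintro _ ⟨m, c, rfl⟩
  refine ⟨m, fun l j i => starRingEnd ℂ (c l j i), ?_⟩
  rw [hF.map_smul, hF.map_mul, hF.map_sum, hF.map_sum]
  simp only [hF.map_cDecomp, hF.map_cDecompBar, ← Finset.smul_sum, mul_smul_comm, smul_smul,
    map_pow, conj_I_pow_sq_mul_neg_one_pow]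

lemma mapsTo_CFormsPQ (hF : IsFInvolution n F) (p q : ℕ) :
    Set.MapsTo F (CFormsPQ n p q) (CFormsPQ n p q) := by
  intro x hx
  induction hx using Submodule.span_induction with
  | mem _ hx =>
    obtain ⟨a, b, rfl⟩ := hx
    rw [hF.map_mul, hF.map_cDecomp, hF.map_prod_cOneBar, mul_smul_comm]
    exact Submodule.smul_mem _ _ (Submodule.subset_span ⟨_, _, rfl⟩)
  | zero => simpa only [hF.map_zero, SetLike.mem_coe] using Submodule.zero_mem _
  | add _ _ _ _ hx hy => simpa only [hF.map_add, SetLike.mem_coe] using Submodule.add_mem _ hx hy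
  | smul _ _ _ hx => simpa only [hF.map_smul, SetLike.mem_coe] using Submodule.smul_mem _ _ hx

lemma mapsTo_cWeakPos (hF : IsFInvolution n F) (p : ℕ) :
    Set.MapsTo F (cWeakPos n p) (cWeakPos n p) := by
  rintro x ⟨hxPQ, hxWeak⟩
  refine ⟨hF.mapsTo_CFormsPQ p p hxPQ, fun η hη => ?_⟩
  obtain ⟨γ, hγ, hxη⟩ :=
    hxWeak (F η) (hF.mapsTo_realCone (hF.mapsTo_cStrongGen (n - p)) hη)
  refine ⟨γ, hγ, ?_⟩
  calc F x * η = F (x * F η) := by rw [hF.map_mul, hF.involutive η]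
    _ = (γ : ℂ) • cOmegaTop n := by rw [hxη, hF.map_ofReal_smul, hF.map_cOmegaTop]

end IsFInvolution

/-- Lemma 2.15. The involution `F` of `Λ^{·,·}V*` maps strongly positive
`(p,p)`-forms to strongly positive forms, positive forms to positive forms, and weakly
positive forms to weakly positive forms. -/
theorem F_preserves_positivity (n p : ℕ) (F : CForms n → CForms n)
    (hF : IsFInvolution n F) :
    (∀ x ∈ cStrongPos n p, F x ∈ cStrongPos n p) ∧
    (∀ x ∈ cPos n p, F x ∈ cPos n p) ∧
    (∀ x ∈ cWeakPos n p, F x ∈ cWeakPos n p) :=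
  ⟨fun _ hx => hF.mapsTo_realCone (hF.mapsTo_cStrongGen p) hx,
    fun _ hx => hF.mapsTo_realCone (hF.mapsTo_cPosGen p) hx,
    fun _ hx => hF.mapsTo_cWeakPos p hx⟩
end
end

section
/- Let n = 4. For all a, b ∈ V', writing a∧J(a)∧b∧J(b) = Σ_{i<k, j<l} w_{ijkl}(a,b) d'u_i∧d''u_j∧d'u_k∧d''u_l, one has w_{1,3,2,4}(a,b) − w_{1,2,3,4}(a,b) + w_{1,2,4,3}(a,b) = 0. Consequently, the ℝ-linear span of the cone Λ^{2,2}_{+,s}V' of strongly positive Lagerberg (2,2)-forms is a proper linear subspace of the space Λ^{2,2}_{sym}V' of symmetric (2,2)-forms, and Λ^{2,2}_{+,s}V' has empty interior in Λ^{2,2}_{sym}V'. -/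
/- Setup: `V = ℝⁿ` with its standard basis, `V' = Hom_ℝ(V,ℝ)` its dual and `V''` a second
copy of `V'`.  The bigraded algebra of Lagerberg forms `Λ^{·,·}V' = Λ_ℝ(V' ⊕ V'')` is
modeled as the exterior algebra over `ℝ` of the free real module on the `2n` generators
`d'u_1,…,d'u_n` (first summand) and `d''u_1,…,d''u_n` (second summand). -/

noncomputable section
open ExteriorAlgebra

/-! The functional `φ = c₀₂₁₃ - c₀₁₂₃ + c₀₁₃₂`, where `cᵢⱼₖₗ` is the coefficient of
`d'uᵢ ∧ d''uⱼ ∧ d'uₖ ∧ d''uₗ`, takes on `a ∧ J(a) ∧ b ∧ J(b)` the value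
`p₀₁ p₂₃ - p₀₂ p₁₃ + p₀₃ p₁₂` with `pᵢₖ = aᵢ bₖ - aₖ bᵢ` the Plücker coordinates of `a ∧ b`,
which vanishes by the Plücker relation. So `φ` kills the span of the strongly positive cone but
not the symmetric form `d'u₀ ∧ d''u₂ ∧ d'u₁ ∧ d''u₃ + J(d'u₀ ∧ d''u₂ ∧ d'u₁ ∧ d''u₃)`. -/

namespace ExteriorAlgebra

variable {R M : Type*} [CommRing R] [AddCommGroup M] [Module R M]

theorem ι_mul_ι_swap (u v : M) : ι R u * ι R v = -(ι R v * ι R u) :=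
  eq_neg_of_add_eq_zero_left (ι_add_mul_swap u v)

theorem ι_mul_ι_mul_ι_mul_ι_swap (u v w x : M) :
    ι R u * ι R v * ι R w * ι R x = ι R v * ι R u * ι R x * ι R w := by
  rw [ι_mul_ι_swap u, mul_assoc _ (ι R w), ι_mul_ι_swap w]
  simp only [neg_mul, mul_neg, neg_neg, mul_assoc]

theorem ι_mul_ι_mul_ι_mul_ι_eq_neg (u v w x : M) :
    ι R u * ι R v * ι R w * ι R x = -(ι R u * ι R w * (ι R v * ι R x)) := by
  rw [mul_assoc (ι R u), ι_mul_ι_swap v]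
  simp only [neg_mul, mul_neg, mul_assoc]

theorem ιMulti_four (u v w x : M) :
    ιMulti R 4 ![u, v, w, x] = ι R u * ι R v * ι R w * ι R x := by
  simp [ιMulti_apply, mul_assoc]

variable {I : Type*}

/-- For injective `κ`, the coordinate of `e_{κ 0} ∧ ⋯ ∧ e_{κ (k-1)}`. -/
def minorForm {k : ℕ} (κ : Fin k → I) : ExteriorAlgebra R (I → R) →ₗ[R] R :=
  liftAlternating (Pi.single k (Matrix.detRowAlternating.compLinearMap (LinearMap.funLeft R R κ)))

theorem minorForm_ιMulti {k : ℕ} (κ : Fin k → I) (v : Fin k → I → R) :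
    minorForm κ (ιMulti R k v) = (Matrix.of fun i j => v i (κ j)).det := by
  rw [minorForm, liftAlternating_apply_ιMulti, Pi.single_eq_same]
  rfl

end ExteriorAlgebra

section Lagerberg

variable {n : ℕ}

theorem lOne_eq_ι (a : Fin n → ℝ) : lOne a = ι ℝ (Sum.elim a (0 : Fin n → ℝ)) := by
  have : Sum.elim a (0 : Fin n → ℝ) =
      ∑ i, a i • (Pi.single (Sum.inl i) 1 : Fin n ⊕ Fin n → ℝ) := by
    ext (i | i) <;> simp [Finset.sum_apply, Pi.single_apply]
  simp [lOne, ldu, this]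

theorem lOne''_eq_ι (a : Fin n → ℝ) : lOne'' a = ι ℝ (Sum.elim (0 : Fin n → ℝ) a) := by
  have : Sum.elim (0 : Fin n → ℝ) a =
      ∑ i, a i • (Pi.single (Sum.inr i) 1 : Fin n ⊕ Fin n → ℝ) := by
    ext (i | i) <;> simp [Finset.sum_apply, Pi.single_apply]
  simp [lOne'', lddu, this]

theorem ldu_eq_lOne (i : Fin n) : ldu i = lOne (Pi.single i 1) := by
  simp [lOne, Pi.single_apply]

theorem lddu_eq_lOne'' (i : Fin n) : lddu i = lOne'' (Pi.single i 1) := by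
  simp [lOne'', Pi.single_apply]

theorem lOne_mul_lOne''_mul_mem_LFormsPQ (a b c d : Fin n → ℝ) :
    lOne a * lOne'' b * lOne c * lOne'' d ∈ LFormsPQ n 2 2 := by
  rw [lOne_eq_ι, lOne''_eq_ι, lOne_eq_ι, lOne''_eq_ι, ι_mul_ι_mul_ι_mul_ι_eq_neg,
    ← lOne_eq_ι, ← lOne''_eq_ι, ← lOne_eq_ι, ← lOne''_eq_ι]
  refine Submodule.neg_mem _ (Submodule.subset_span ⟨![a, c], ![b, d], ?_⟩)
  simp [lDecomp, lDecomp'', List.ofFn_succ]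

theorem monomial_mem_LFormsPQ (i j k l : Fin n) :
    ldu i * lddu j * ldu k * lddu l ∈ LFormsPQ n 2 2 := by
  simpa only [ldu_eq_lOne, lddu_eq_lOne''] using lOne_mul_lOne''_mul_mem_LFormsPQ _ _ _ _

theorem exists_eq_of_mem_lStrongGen_two {x : LForms n} (hx : x ∈ lStrongGen n 2) :
    ∃ a b, x = lOne a * lOne'' a * lOne b * lOne'' b := by
  obtain ⟨c, rfl⟩ := hx
  exact ⟨c 0, c 1, by simp [List.ofFn_succ, mul_assoc]⟩

theorem lCone_subset_span (S : Set (LForms n)) : lCone S ⊆ Submodule.span ℝ S := by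
  rintro x ⟨m, t, y, -, hy, rfl⟩
  exact Submodule.sum_mem _ fun k _ => Submodule.smul_mem _ _ (Submodule.subset_span (hy k))

theorem span_lStrongPos_le {p : ℕ} {P : Submodule ℝ (LForms n)} (h : lStrongGen n p ⊆ P) :
    Submodule.span ℝ (lStrongPos n p) ≤ P :=
  Submodule.span_le.2 ((lCone_subset_span _).trans (Submodule.span_le.2 h))

namespace IsLagerbergJ

variable {J : LForms n → LForms n}

def toLinearMap (hJ : IsLagerbergJ n J) : LForms n →ₗ[ℝ] LForms n where
  toFun := J
  map_add' := hJ.map_add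
  map_smul' := hJ.map_smul

@[simp]
theorem toLinearMap_apply (hJ : IsLagerbergJ n J) (x : LForms n) : hJ.toLinearMap x = J x := rfl

theorem map_lOne (hJ : IsLagerbergJ n J) (a : Fin n → ℝ) : J (lOne a) = lOne'' a := by
  rw [← hJ.toLinearMap_apply]
  simp [lOne, lOne'', map_sum, hJ.map_du]

theorem map_lOne'' (hJ : IsLagerbergJ n J) (a : Fin n → ℝ) : J (lOne'' a) = lOne a := by
  rw [← hJ.toLinearMap_apply]
  simp [lOne, lOne'', map_sum, hJ.map_ddu]

theorem map_lOne_mul_lOne''_mul (hJ : IsLagerbergJ n J) (a b c d : Fin n → ℝ) :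
    J (lOne a * lOne'' b * lOne c * lOne'' d) = lOne b * lOne'' a * lOne d * lOne'' c := by
  simp only [hJ.map_mul, hJ.map_lOne, hJ.map_lOne'']
  simp only [lOne_eq_ι, lOne''_eq_ι]
  exact ι_mul_ι_mul_ι_mul_ι_swap _ _ _ _

theorem map_monomial (hJ : IsLagerbergJ n J) (i j k l : Fin n) :
    J (ldu i * lddu j * ldu k * lddu l) = ldu j * lddu i * ldu l * lddu k := by
  simp only [ldu_eq_lOne, lddu_eq_lOne'', hJ.map_lOne_mul_lOne''_mul]

def symSubmodule (hJ : IsLagerbergJ n J) (p : ℕ) : Submodule ℝ (LForms n) where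
  carrier := lSym n p J
  add_mem' := by
    rintro x y ⟨hx, hJx⟩ ⟨hy, hJy⟩
    exact ⟨add_mem hx hy, by rw [hJ.map_add, hJx, hJy, smul_add]⟩
  zero_mem' := ⟨zero_mem _, by rw [← hJ.toLinearMap_apply, map_zero, smul_zero]⟩
  smul_mem' := by
    rintro c x ⟨hx, hJx⟩
    exact ⟨Submodule.smul_mem _ c hx, by rw [hJ.map_smul, hJx, smul_comm]⟩

theorem lStrongGen_two_subset_lSym (hJ : IsLagerbergJ n J) : lStrongGen n 2 ⊆ lSym n 2 J := by
  intro x hx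
  obtain ⟨a, b, rfl⟩ := exists_eq_of_mem_lStrongGen_two hx
  refine ⟨lOne_mul_lOne''_mul_mem_LFormsPQ a a b b, ?_⟩
  rw [hJ.map_lOne_mul_lOne''_mul]
  simp

theorem span_lStrongPos_two_subset_lSym (hJ : IsLagerbergJ n J) :
    (Submodule.span ℝ (lStrongPos n 2) : Set (LForms n)) ⊆ lSym n 2 J :=
  span_lStrongPos_le (P := hJ.symSubmodule 2) hJ.lStrongGen_two_subset_lSym

theorem monomial_add_swap_mem_lSym (hJ : IsLagerbergJ n J) (i j k l : Fin n) :
    ldu i * lddu j * ldu k * lddu l + ldu j * lddu i * ldu l * lddu k ∈ lSym n 2 J := by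
  refine ⟨add_mem (monomial_mem_LFormsPQ i j k l) (monomial_mem_LFormsPQ j i l k), ?_⟩
  rw [hJ.map_add, hJ.map_monomial, hJ.map_monomial, add_comm]
  simp

end IsLagerbergJ

def lagerbergMinor (i j k l : Fin n) : LForms n →ₗ[ℝ] ℝ :=
  minorForm ![.inl i, .inr j, .inl k, .inr l]

theorem lagerbergMinor_lOne_mul_lOne''_mul (i j k l : Fin n) (a b c d : Fin n → ℝ) :
    lagerbergMinor i j k l (lOne a * lOne'' b * lOne c * lOne'' d) =
      (a i * c k - a k * c i) * (b j * d l - b l * d j) := by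
  rw [lOne_eq_ι, lOne''_eq_ι, lOne_eq_ι, lOne''_eq_ι, ← ιMulti_four, lagerbergMinor,
    minorForm_ιMulti]
  have h : (Fin.succAbove 2 2 : Fin 4) = 3 := rfl
  simp [Matrix.det_succ_row_zero, Fin.sum_univ_succ, h]
  ring

theorem single_mul_single_sub_single_mul_single_of_lt {α : Type*} [LinearOrder α]
    {i k i' k' : α} (hik : i < k) (hik' : i' < k') :
    (Pi.single i' 1 : α → ℝ) i * (Pi.single k' 1 : α → ℝ) k -
        (Pi.single i' 1 : α → ℝ) k * (Pi.single k' 1 : α → ℝ) i =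
      if i' = i ∧ k' = k then 1 else 0 := by
  have h : ¬(k = i' ∧ i = k') := by
    rintro ⟨rfl, rfl⟩
    exact lt_asymm hik hik'
  simp only [Pi.single_apply, ite_zero_mul_ite_zero, mul_one, if_neg h, sub_zero, eq_comm]

theorem lagerbergMinor_monomial {i j k l i' j' k' l' : Fin n} (hik : i < k) (hjl : j < l)
    (hik' : i' < k') (hjl' : j' < l') :
    lagerbergMinor i j k l (ldu i' * lddu j' * ldu k' * lddu l') =
      if i' = i ∧ j' = j ∧ k' = k ∧ l' = l then 1 else 0 := by
  simp only [ldu_eq_lOne, lddu_eq_lOne'', lagerbergMinor_lOne_mul_lOne''_mul,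
    single_mul_single_sub_single_mul_single_of_lt hik hik',
    single_mul_single_sub_single_mul_single_of_lt hjl hjl', ite_zero_mul_ite_zero, mul_one]
  simp only [and_assoc, and_left_comm]

theorem lagerbergMinor_sum_monomial {i j k l : Fin n} (hik : i < k) (hjl : j < l)
    (w : Fin n → Fin n → Fin n → Fin n → ℝ) :
    lagerbergMinor i j k l (∑ i', ∑ j', ∑ k', ∑ l',
      (if i' < k' ∧ j' < l' then w i' j' k' l' else 0) • (ldu i' * lddu j' * ldu k' * lddu l')) =
      w i j k l := by
  have h (i' j' k' l' : Fin n) :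
      (if i' < k' ∧ j' < l' then w i' j' k' l' else 0) *
          lagerbergMinor i j k l (ldu i' * lddu j' * ldu k' * lddu l') =
        if i' = i ∧ j' = j ∧ k' = k ∧ l' = l then w i j k l else 0 := by
    split_ifs with h₁ h₂ h₂
    · rw [lagerbergMinor_monomial hik hjl h₁.1 h₁.2, if_pos h₂]
      obtain ⟨rfl, rfl, rfl, rfl⟩ := h₂
      exact mul_one _
    · rw [lagerbergMinor_monomial hik hjl h₁.1 h₁.2, if_neg h₂, mul_zero]
    · obtain ⟨rfl, rfl, rfl, rfl⟩ := h₂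
      exact absurd ⟨hik, hjl⟩ h₁
    · exact zero_mul _
  simp only [map_sum, map_smul, smul_eq_mul, h]
  simp [ite_and]

def pluckerForm (p q r s : Fin n) : LForms n →ₗ[ℝ] ℝ :=
  lagerbergMinor p r q s - lagerbergMinor p q r s + lagerbergMinor p q s r

theorem pluckerForm_lOne_mul_lOne''_mul_self (p q r s : Fin n) (a b : Fin n → ℝ) :
    pluckerForm p q r s (lOne a * lOne'' a * lOne b * lOne'' b) = 0 := by
  simp only [pluckerForm, LinearMap.add_apply, LinearMap.sub_apply,
    lagerbergMinor_lOne_mul_lOne''_mul]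
  ring

theorem pluckerForm_eq_zero_of_mem_span {p q r s : Fin n} {x : LForms n}
    (hx : x ∈ Submodule.span ℝ (lStrongPos n 2)) : pluckerForm p q r s x = 0 := by
  refine span_lStrongPos_le (P := LinearMap.ker (pluckerForm p q r s)) (fun y hy => ?_) hx
  obtain ⟨a, b, rfl⟩ := exists_eq_of_mem_lStrongGen_two hy
  exact pluckerForm_lOne_mul_lOne''_mul_self p q r s a b

theorem pluckerForm_sum_monomial {p q r s : Fin n} (hpq : p < q) (hqr : q < r) (hrs : r < s)
    (w : Fin n → Fin n → Fin n → Fin n → ℝ) :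
    pluckerForm p q r s (∑ i, ∑ j, ∑ k, ∑ l,
      (if i < k ∧ j < l then w i j k l else 0) • (ldu i * lddu j * ldu k * lddu l)) =
      w p r q s - w p q r s + w p q s r := by
  simp only [pluckerForm, LinearMap.add_apply, LinearMap.sub_apply]
  rw [lagerbergMinor_sum_monomial hpq hrs,
    lagerbergMinor_sum_monomial (hpq.trans hqr) (hqr.trans hrs),
    lagerbergMinor_sum_monomial (hpq.trans (hqr.trans hrs)) hqr]

theorem plucker_relation_of_eq_sum {p q r s : Fin n} (hpq : p < q) (hqr : q < r) (hrs : r < s)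
    (a b : Fin n → ℝ) (w : Fin n → Fin n → Fin n → Fin n → ℝ)
    (h : lOne a * lOne'' a * lOne b * lOne'' b = ∑ i, ∑ j, ∑ k, ∑ l,
      (if i < k ∧ j < l then w i j k l else 0) • (ldu i * lddu j * ldu k * lddu l)) :
    w p r q s - w p q r s + w p q s r = 0 := by
  have h' := congrArg (pluckerForm p q r s) h
  rwa [pluckerForm_lOne_mul_lOne''_mul_self, pluckerForm_sum_monomial hpq hqr hrs,
    eq_comm] at h'

end Lagerberg

/-- Example 2.18. Let `n = 4`.  For all `a, b ∈ V'`, writing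
`a ∧ J(a) ∧ b ∧ J(b) = Σ_{i<k, j<l} w_{ijkl}(a,b) d'u_i ∧ d''u_j ∧ d'u_k ∧ d''u_l`,
one has `w_{1,3,2,4} - w_{1,2,3,4} + w_{1,2,4,3} = 0` (here written with 0-based
indices).  Consequently, the ℝ-linear span of the cone `Λ^{2,2}_{+,s}V'` of strongly
positive Lagerberg `(2,2)`-forms is a proper subset of the space `Λ^{2,2}_{sym}V'` of
symmetric `(2,2)`-forms, and `Λ^{2,2}_{+,s}V'` has empty interior in `Λ^{2,2}_{sym}V'`
(equivalently, it is annihilated by a linear functional not vanishing on all of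
`Λ^{2,2}_{sym}V'`). -/
theorem strongly_positive_cone_spans_proper_subspace
    (J : LForms 4 → LForms 4) (hJ : IsLagerbergJ 4 J) :
    (∀ (a b : Fin 4 → ℝ) (w : Fin 4 → Fin 4 → Fin 4 → Fin 4 → ℝ),
      lOne a * lOne'' a * lOne b * lOne'' b =
        ∑ i, ∑ j, ∑ k, ∑ l,
          (if i < k ∧ j < l then w i j k l else 0) • (ldu i * lddu j * ldu k * lddu l) →
      w 0 2 1 3 - w 0 1 2 3 + w 0 1 3 2 = 0) ∧
    (Submodule.span ℝ (lStrongPos 4 2) : Set (LForms 4)) ⊂ lSym 4 2 J ∧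
    ∃ φ : LForms 4 →ₗ[ℝ] ℝ,
      (∀ x ∈ lStrongPos 4 2, φ x = 0) ∧ ∃ y ∈ lSym 4 2 J, φ y ≠ 0 := by
  set φ : LForms 4 →ₗ[ℝ] ℝ := pluckerForm 0 1 2 3
  set y : LForms 4 := ldu 0 * lddu 2 * ldu 1 * lddu 3 + ldu 2 * lddu 0 * ldu 3 * lddu 1
  have hy : y ∈ lSym 4 2 J := hJ.monomial_add_swap_mem_lSym 0 2 1 3
  have hφy : φ y ≠ 0 := by
    simp [φ, y, pluckerForm, ldu_eq_lOne, lddu_eq_lOne'', lagerbergMinor_lOne_mul_lOne''_mul]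
  have hφ (x) (hx : x ∈ Submodule.span ℝ (lStrongPos 4 2)) : φ x = 0 :=
    pluckerForm_eq_zero_of_mem_span hx
  refine ⟨fun a b w => plucker_relation_of_eq_sum (by decide) (by decide) (by decide) a b w,
    ⟨hJ.span_lStrongPos_two_subset_lSym, fun hsub => hφy (hφ y (hsub hy))⟩,
    φ, fun x hx => hφ x (Submodule.subset_span hx), y, hy, hφy⟩
end
end

section
/- Let n = 4 and let ω = d'u_3∧d''u_1∧d'u_4∧d''u_2 − d'u_2∧d''u_1∧d'u_4∧d''u_3 + d'u_2∧d''u_1∧d'u_3∧d''u_4 + d'u_1∧d''u_3∧d'u_2∧d''u_4 − d'u_1∧d''u_2∧d'u_3∧d''u_4 + d'u_1∧d''u_2∧d'u_4∧d''u_3 ∈ Λ^{2,2}V'. Then ω is nonzero, symmetric, and satisfies η∧ω = 0 for every strongly positive η ∈ Λ^{2,2}V'; consequently Cω is weakly positive for every real C, so the cone Λ^{2,2}_{+,w}V' of weakly positive Lagerberg (2,2)-forms contains a nonzero linear subspace and in particular is not strictly convex. -/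
/- Setup: `V = ℝⁿ` with its standard basis, `V' = Hom_ℝ(V,ℝ)` its dual and `V''` a second
copy of `V'`.  The bigraded algebra of Lagerberg forms `Λ^{·,·}V' = Λ_ℝ(V' ⊕ V'')` is
modeled as the exterior algebra over `ℝ` of the free real module on the `2n` generators
`d'u_1,…,d'u_n` (first summand) and `d''u_1,…,d''u_n` (second summand). -/

noncomputable section
open ExteriorAlgebra

/-! The forms `α ∧ J α` (`α ∈ V'`) have even degree, so they are central, and every strongly
positive `(2,2)`-form is a nonnegative combination of products of two of them. Writing
`α ∧ J α = Σ bᵢ bⱼ d'uᵢ ∧ d''uⱼ`, it is annihilated by `ω` because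
`d'uᵢ ∧ d''uⱼ ∧ ω` is antisymmetric in `(i, j)`; hence `η ∧ ω = ω ∧ η = 0` and every `C ω` is
weakly positive with `γ = 0`. In the monomial basis `d'u_a ∧ d'u_b ∧ d''u_c ∧ d''u_d`, `J`
exchanges `(a, b)` with `(c, d)`, and the coefficients of `ω` are invariant under this
exchange. Finally `ω ∧ d'u_1 ∧ d'u_2 ∧ d''u_3 ∧ d''u_4` is minus the top monomial, which is
nonzero. -/

namespace ExteriorAlgebra

variable {R M : Type*} [CommRing R] [AddCommGroup M] [Module R M]

theorem ι_mul_ι_anticomm (x y : M) : ι R x * ι R y = -(ι R y * ι R x) :=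
  eq_neg_of_add_eq_zero_left (ι_add_mul_swap x y)

theorem ι_mul_ι_mem_center (x y : M) :
    ι R x * ι R y ∈ Subalgebra.center R (ExteriorAlgebra R M) := by
  rw [Subalgebra.mem_center_iff]
  intro a
  induction a using ExteriorAlgebra.induction with
  | algebraMap r => exact Algebra.commutes r _
  | ι z =>
    rw [← mul_assoc, ι_mul_ι_anticomm z x, neg_mul, mul_assoc, ι_mul_ι_anticomm z y, mul_neg,
      neg_neg, mul_assoc]
  | mul a b ha hb => rw [mul_assoc, hb, ← mul_assoc, ha, mul_assoc]
  | add a b ha hb => rw [add_mul, mul_add, ha, hb]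

theorem ιMulti_basis_ne_zero [Nontrivial R] {k : ℕ} (b : Module.Basis (Fin k) R M) :
    ιMulti R k b ≠ 0 := by
  intro h
  have hpair := exteriorPower.pairingDual_ιMulti_ιMulti b.coord b
  rw [show exteriorPower.ιMulti R k b = 0 from Subtype.ext h, map_zero] at hpair
  have hdiag : Matrix.of (fun i j => b.coord j (b i)) = 1 := by
    ext i j
    simp [Matrix.one_apply, Finsupp.single_apply]
  rw [hdiag, Matrix.det_one] at hpair
  exact zero_ne_one hpair

theorem ιMulti_ne_zero_of_linearIndependent {K E : Type*} [Field K] [AddCommGroup E]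
    [Module K E] {k : ℕ} {v : Fin k → E} (hv : LinearIndependent K v) : ιMulti K k v ≠ 0 := by
  intro h
  let W := Submodule.span K (Set.range v)
  have hb : W.subtype ∘ Module.Basis.span hv = v :=
    funext fun i => by simp [Module.Basis.span_apply]
  apply ιMulti_basis_ne_zero (Module.Basis.span hv)
  apply map_injective_field (Submodule.ker_subtype W)
  rw [map_apply_ιMulti, hb, h, map_zero]

end ExteriorAlgebra

theorem sum_sum_mul_smul_eq_zero_of_antisymm {ι K E : Type*} [Fintype ι] [Field K] [CharZero K]
    [AddCommGroup E] [Module K E] (b : ι → K) (X : ι → ι → E) (hX : ∀ i j, X j i = -X i j) :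
    ∑ i, ∑ j, (b i * b j) • X i j = 0 := by
  have hS : ∑ i, ∑ j, (b i * b j) • X i j = -∑ i, ∑ j, (b i * b j) • X i j := by
    conv_lhs => rw [Finset.sum_comm]
    rw [← Finset.sum_neg_distrib]
    refine Finset.sum_congr rfl fun i _ => ?_
    rw [← Finset.sum_neg_distrib]
    refine Finset.sum_congr rfl fun j _ => ?_
    rw [hX, smul_neg, mul_comm]
  have h2 : (2 : K) • ∑ i, ∑ j, (b i * b j) • X i j = 0 := by
    rw [two_smul]
    nth_rewrite 2 [hS]
    exact add_neg_cancel _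
  exact (smul_eq_zero.mp h2).resolve_left two_ne_zero

section Lagerberg

variable {n : ℕ}

theorem lOne_eq_ι_s12 (c : Fin n → ℝ) : lOne c = ι ℝ (∑ i, c i • Pi.single (Sum.inl i) 1) := by
  simp only [lOne, ldu, map_sum, map_smul]

theorem lOne''_eq_ι_s12 (c : Fin n → ℝ) : lOne'' c = ι ℝ (∑ i, c i • Pi.single (Sum.inr i) 1) := by
  simp only [lOne'', lddu, map_sum, map_smul]

theorem lOne_mul_lOne''_mem_center (c : Fin n → ℝ) :
    lOne c * lOne'' c ∈ Subalgebra.center ℝ (LForms n) := by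
  rw [lOne_eq_ι_s12, lOne''_eq_ι_s12]
  exact ι_mul_ι_mem_center _ _

theorem lStrongGen_subset_center (p : ℕ) :
    lStrongGen n p ⊆ Subalgebra.center ℝ (LForms n) := by
  rintro _ ⟨c, rfl⟩
  exact list_prod_mem (List.forall_mem_ofFn_iff.mpr fun j => lOne_mul_lOne''_mem_center (c j))

theorem lStrongPos_subset_center (p : ℕ) :
    lStrongPos n p ⊆ Subalgebra.center ℝ (LForms n) := fun _ hη =>
  (Submodule.span_le (p := Subalgebra.toSubmodule (Subalgebra.center ℝ (LForms n)))).mpr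
    (lStrongGen_subset_center p) (lCone_subset_span _ hη)

theorem lOne_single (i : Fin n) : lOne (Pi.single i 1) = ldu i := by
  simp [lOne, Pi.single_apply, ite_smul]

theorem lOne''_single (i : Fin n) : lOne'' (Pi.single i 1) = lddu i := by
  simp [lOne'', Pi.single_apply, ite_smul]

def lMonomial (a b c d : Fin n) : LForms n := ldu a * ldu b * (lddu c * lddu d)

theorem lMonomial_mem (a b c d : Fin n) : lMonomial a b c d ∈ LFormsPQ n 2 2 :=
  Submodule.subset_span ⟨![Pi.single a 1, Pi.single b 1], ![Pi.single c 1, Pi.single d 1], by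
    simp [lMonomial, lDecomp, lDecomp'', List.ofFn_succ, lOne_single, lOne''_single, mul_assoc]⟩

namespace IsLagerbergJ

variable {J : LForms n → LForms n} (hJ : IsLagerbergJ n J)
include hJ

theorem map_neg (x : LForms n) : J (-x) = -J x := by
  rw [← neg_one_smul ℝ x, hJ.map_smul, neg_one_smul]

theorem map_sub (x y : LForms n) : J (x - y) = J x - J y := by
  rw [sub_eq_add_neg, hJ.map_add, hJ.map_neg, sub_eq_add_neg]

theorem map_lMonomial (a b c d : Fin n) : J (lMonomial a b c d) = lMonomial c d a b := by
  simp only [lMonomial, hJ.map_mul, hJ.map_du, hJ.map_ddu]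
  exact (Subalgebra.mem_center_iff.mp (ι_mul_ι_mem_center _ _) _).symm

end IsLagerbergJ

end Lagerberg

section NormalForm

variable {n : ℕ}

/- Oriented anticommutation rules: with them `simp` sorts every monomial into the form
`d'u_{i₁} ⋯ d'u_{iₖ} d''u_{j₁} ⋯ d''u_{jₗ}` with increasing indices, or kills it. -/

@[simp] theorem ldu_mul_self (i : Fin n) : ldu i * ldu i = 0 := ι_sq_zero _

@[simp] theorem lddu_mul_self (i : Fin n) : lddu i * lddu i = 0 := ι_sq_zero _

@[simp] theorem ldu_mul_ldu_self_mul (i : Fin n) (x : LForms n) : ldu i * (ldu i * x) = 0 := by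
  rw [← mul_assoc, ldu_mul_self, zero_mul]

@[simp] theorem lddu_mul_lddu_self_mul (i : Fin n) (x : LForms n) :
    lddu i * (lddu i * x) = 0 := by
  rw [← mul_assoc, lddu_mul_self, zero_mul]

@[simp] theorem ldu_mul_ldu_of_lt {i j : Fin n} (_ : j < i) :
    ldu i * ldu j = -(ldu j * ldu i) := ι_mul_ι_anticomm _ _

@[simp] theorem lddu_mul_lddu_of_lt {i j : Fin n} (_ : j < i) :
    lddu i * lddu j = -(lddu j * lddu i) := ι_mul_ι_anticomm _ _

@[simp] theorem lddu_mul_ldu (i j : Fin n) : lddu i * ldu j = -(ldu j * lddu i) :=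
  ι_mul_ι_anticomm _ _

@[simp] theorem ldu_mul_ldu_mul_of_lt {i j : Fin n} (h : j < i) (x : LForms n) :
    ldu i * (ldu j * x) = -(ldu j * (ldu i * x)) := by
  rw [← mul_assoc, ldu_mul_ldu_of_lt h, neg_mul, mul_assoc]

@[simp] theorem lddu_mul_lddu_mul_of_lt {i j : Fin n} (h : j < i) (x : LForms n) :
    lddu i * (lddu j * x) = -(lddu j * (lddu i * x)) := by
  rw [← mul_assoc, lddu_mul_lddu_of_lt h, neg_mul, mul_assoc]

@[simp] theorem lddu_mul_ldu_mul (i j : Fin n) (x : LForms n) :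
    lddu i * (ldu j * x) = -(ldu j * (lddu i * x)) := by
  rw [← mul_assoc, lddu_mul_ldu, neg_mul, mul_assoc]

end NormalForm

def lOmega : LForms 4 :=
  ldu 2 * lddu 0 * ldu 3 * lddu 1
    - ldu 1 * lddu 0 * ldu 3 * lddu 2
    + ldu 1 * lddu 0 * ldu 2 * lddu 3
    + ldu 0 * lddu 2 * ldu 1 * lddu 3
    - ldu 0 * lddu 1 * ldu 2 * lddu 3
    + ldu 0 * lddu 1 * ldu 3 * lddu 2

theorem lOmega_eq : lOmega = -lMonomial 2 3 0 1 + lMonomial 1 3 0 2 - lMonomial 1 2 0 3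
    - lMonomial 0 1 2 3 + lMonomial 0 2 1 3 - lMonomial 0 3 1 2 := by
  simp [lOmega, lMonomial, mul_assoc]
  abel

theorem ldu_mul_lddu_mul_lOmega_antisymm (i j : Fin 4) :
    ldu j * lddu i * lOmega = -(ldu i * lddu j * lOmega) := by
  fin_cases i <;> fin_cases j <;> simp [lOmega, mul_assoc, mul_add] <;> abel

theorem lOmega_mul_lMonomial :
    lOmega * lMonomial 0 1 2 3 =
      -(ldu 0 * ldu 1 * ldu 2 * ldu 3 * lddu 0 * lddu 1 * lddu 2 * lddu 3) := by
  simp [lOmega, lMonomial, mul_assoc, add_mul]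

theorem IsLagerbergJ.map_lOmega {J : LForms 4 → LForms 4} (hJ : IsLagerbergJ 4 J) :
    J lOmega = lOmega := by
  simp only [lOmega_eq, hJ.map_add, hJ.map_sub, hJ.map_neg, hJ.map_lMonomial]
  abel

theorem lOmega_mem : lOmega ∈ LFormsPQ 4 2 2 := by
  rw [lOmega_eq]
  refine sub_mem (add_mem (sub_mem (sub_mem (add_mem (neg_mem ?_) ?_) ?_) ?_) ?_) ?_ <;>
    exact lMonomial_mem _ _ _ _

theorem lOne_mul_lOne''_mul_lOmega (b : Fin 4 → ℝ) : lOne b * lOne'' b * lOmega = 0 := by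
  have hexpand :
      lOne b * lOne'' b * lOmega = ∑ i, ∑ j, (b i * b j) • (ldu i * lddu j * lOmega) := by
    rw [lOne, lOne'', Finset.sum_mul_sum, Finset.sum_mul]
    refine Finset.sum_congr rfl fun i _ => ?_
    rw [Finset.sum_mul]
    refine Finset.sum_congr rfl fun j _ => ?_
    rw [smul_mul_smul_comm, smul_mul_assoc]
  rw [hexpand]
  exact sum_sum_mul_smul_eq_zero_of_antisymm b _ ldu_mul_lddu_mul_lOmega_antisymm

theorem lStrongGen_mul_lOmega {p : ℕ} {x : LForms 4} (hx : x ∈ lStrongGen 4 (p + 1)) :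
    x * lOmega = 0 := by
  obtain ⟨c, rfl⟩ := hx
  rw [List.ofFn_succ', List.prod_concat, mul_assoc, lOne_mul_lOne''_mul_lOmega, mul_zero]

theorem lStrongPos_mul_lOmega {p : ℕ} {η : LForms 4} (hη : η ∈ lStrongPos 4 (p + 1)) :
    η * lOmega = 0 :=
  (Submodule.span_le (p := LinearMap.ker (LinearMap.mulRight ℝ lOmega))).mpr
    (fun _ hx => lStrongGen_mul_lOmega hx) (lCone_subset_span _ hη)

theorem ldu_mul_lddu_top_ne_zero :
    ldu 0 * ldu 1 * ldu 2 * ldu 3 * lddu 0 * lddu 1 * lddu 2 * lddu 3 ≠ (0 : LForms 4) := by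
  let e : Fin 8 → Fin 4 ⊕ Fin 4 :=
    ![.inl 0, .inl 1, .inl 2, .inl 3, .inr 0, .inr 1, .inr 2, .inr 3]
  have hind : LinearIndependent ℝ (Pi.basisFun ℝ (Fin 4 ⊕ Fin 4) ∘ e) :=
    (Pi.basisFun ℝ _).linearIndependent.comp e (by decide)
  have htop : ExteriorAlgebra.ιMulti ℝ 8 (Pi.basisFun ℝ (Fin 4 ⊕ Fin 4) ∘ e) =
      ldu 0 * ldu 1 * ldu 2 * ldu 3 * lddu 0 * lddu 1 * lddu 2 * lddu 3 := by
    simp only [ExteriorAlgebra.ιMulti_apply, List.ofFn_succ, List.ofFn_zero, List.prod_cons,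
      List.prod_nil, mul_one, Function.comp_apply, Pi.basisFun_apply, mul_assoc]
    rfl
  exact htop ▸ ExteriorAlgebra.ιMulti_ne_zero_of_linearIndependent hind

theorem lOmega_ne_zero : lOmega ≠ 0 := by
  intro h
  have htop := lOmega_mul_lMonomial
  rw [h, zero_mul, eq_comm, neg_eq_zero] at htop
  exact ldu_mul_lddu_top_ne_zero htop

/-- Example 2.18, continued. Let `n = 4` and let
`ω = d'u_3∧d''u_1∧d'u_4∧d''u_2 − d'u_2∧d''u_1∧d'u_4∧d''u_3 + d'u_2∧d''u_1∧d'u_3∧d''u_4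
   + d'u_1∧d''u_3∧d'u_2∧d''u_4 − d'u_1∧d''u_2∧d'u_3∧d''u_4 + d'u_1∧d''u_2∧d'u_4∧d''u_3`
(written with 0-based indices below).  Then `ω` is nonzero, symmetric, and satisfies
`η ∧ ω = 0` for every strongly positive `η ∈ Λ^{2,2}V'`; consequently `C • ω` is weakly
positive for every real `C`, so the cone `Λ^{2,2}_{+,w}V'` contains a nonzero linear
subspace and in particular is not strictly convex. -/
theorem weakly_positive_cone_not_strictly_convex
    (J : LForms 4 → LForms 4) (hJ : IsLagerbergJ 4 J)
    (ω : LForms 4)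
    (hω : ω = ldu 2 * lddu 0 * ldu 3 * lddu 1
      - ldu 1 * lddu 0 * ldu 3 * lddu 2
      + ldu 1 * lddu 0 * ldu 2 * lddu 3
      + ldu 0 * lddu 2 * ldu 1 * lddu 3
      - ldu 0 * lddu 1 * ldu 2 * lddu 3
      + ldu 0 * lddu 1 * ldu 3 * lddu 2) :
    ω ≠ 0 ∧ J ω = ω ∧ (∀ η ∈ lStrongPos 4 2, η * ω = 0) ∧
      ∀ C : ℝ, C • ω ∈ lWeakPos 4 2 J := by
  obtain rfl : ω = lOmega := hω
  have hsym : J lOmega = lOmega := hJ.map_lOmega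
  have hannih : ∀ η ∈ lStrongPos 4 2, η * lOmega = 0 := fun _ => lStrongPos_mul_lOmega
  refine ⟨lOmega_ne_zero, hsym, hannih, fun C =>
    ⟨⟨Submodule.smul_mem _ C lOmega_mem, ?_⟩, fun η hη => ⟨0, le_rfl, ?_⟩⟩⟩
  · rw [hJ.map_smul, hsym, neg_one_sq, one_smul]
  · have hcomm := Subalgebra.mem_center_iff.mp (lStrongPos_subset_center 2 hη) lOmega
    rw [smul_mul_assoc, hcomm, hannih η hη, smul_zero, zero_smul]
end
end
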